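/- arXiv:math/0501061 — 3 statements merged into one kernel-verified Lean document; each statement's English description precedes it below -/
import Mathlib

section
/- Let Ψ ⊆ Φ⁺ be a root basis such that W(Ψ) is finite. Then Ψ is linearly independent and the bilinear form ⟨·,·⟩ restricted to span(Ψ) is positive definite. -/
noncomputable section

namespace CoxCentralizer

open Classical

variable {B : Type*} {W : Type*} [Group W] {V : Type*} [AddCommGroup V] [Module ℝ V]

/-- The geometric representation of a Coxeter system `(W, S)` (with `S` indexed by `B`):
a vector space `V` with a linearly independent family of simple roots `α`, a `W`-invariant
symmetric bilinear form determined by the Coxeter matrix, and a faithful action of `W`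
for which the simple reflections act by the usual formula. -/
structure GeomRep (M : CoxeterMatrix B) (cs : CoxeterSystem M W)
    (V : Type*) [AddCommGroup V] [Module ℝ V] : Type _ where
  α : B → V
  indep : LinearIndependent ℝ α
  spans : ⊤ ≤ Submodule.span ℝ (Set.range α)
  form : V →ₗ[ℝ] V →ₗ[ℝ] ℝ
  symm : ∀ u v : V, form u v = form v u
  ρ : W →* (V ≃ₗ[ℝ] V)
  faithful : Function.Injective ρ
  invariant : ∀ (w : W) (u v : V), form (ρ w u) (ρ w v) = form u v
  form_simple_fin : ∀ i j : B, M i j ≠ 0 →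
    form (α i) (α j) = - Real.cos (Real.pi / (M i j : ℝ))
  form_simple_inf : ∀ i j : B, M i j = 0 → form (α i) (α j) = -1
  simple_act : ∀ (i : B) (v : V), ρ (cs.simple i) v = v - (2 * form (α i) v) • α i

variable {M : CoxeterMatrix B} {cs : CoxeterSystem M W}

namespace GeomRep

variable (G : GeomRep M cs V)

/-- The root system `Φ = W · Π`. -/
def Phi : Set V := {v | ∃ (w : W) (i : B), G.ρ w (G.α i) = v}

/-- The set `Π` of simple roots. -/
def Pi0 : Set V := Set.range G.α

/-- The positive roots: roots that are nonnegative linear combinations of simple roots. -/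
def PhiPos : Set V :=
  {v ∈ G.Phi | ∃ c : B →₀ ℝ, (∀ i, 0 ≤ c i) ∧ v = c.sum fun i r => r • G.α i}

/-- The negative roots `Φ⁻ = -Φ⁺`. -/
def PhiNeg : Set V := {v | -v ∈ G.PhiPos}

/-- The reflection `s_γ = w s w⁻¹` along a root `γ = w · α_s`. -/
def reflAlong (γ : V) : W :=
  if h : γ ∈ G.Phi then h.choose * cs.simple h.choose_spec.choose * h.choose⁻¹ else 1

/-- `Ψ[w] = {γ ∈ Ψ ∩ Φ⁺ : w · γ ∈ Φ⁻}`. -/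
def inver (Ψ : Set V) (w : W) : Set V := {γ ∈ Ψ ∩ G.PhiPos | G.ρ w γ ∈ G.PhiNeg}

/-- `W(Ψ)`: the reflection subgroup generated by the reflections along the roots in `Ψ`. -/
def WR (Ψ : Set V) : Subgroup W := Subgroup.closure (G.reflAlong '' Ψ)

/-- The set `H · A` for a subgroup `H ≤ W` and a set `A ⊆ V`. -/
def act (H : Subgroup W) (A : Set V) : Set V := {v | ∃ w ∈ H, ∃ a ∈ A, G.ρ w a = v}

/-- The orbit `W(Ψ) · Ψ`. -/
def orbit (Ψ : Set V) : Set V := G.act (G.WR Ψ) Ψ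

/-- `Π(Ψ)`: the simple system of the reflection subgroup `W(Ψ)`; the roots
`γ ∈ (W(Ψ)·Ψ) ∩ Φ⁺` such that in every expression of `γ` as a positive linear combination
of roots in `(W(Ψ)·Ψ) ∩ Φ⁺`, all the roots involved equal `γ`. -/
def simpleSet (Ψ : Set V) : Set V :=
  {γ ∈ G.orbit Ψ ∩ G.PhiPos |
    ∀ (n : ℕ) (c : Fin n → ℝ) (β : Fin n → V),
      (∀ k, 0 < c k) → (∀ k, β k ∈ G.orbit Ψ ∩ G.PhiPos) →
      γ = ∑ k, c k • β k → ∀ k, β k = γ}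

/-- `S(Ψ) = {s_γ : γ ∈ Π(Ψ)}`, the canonical Coxeter generating set of `W(Ψ)`. -/
def SR (Ψ : Set V) : Set W := G.reflAlong '' G.simpleSet Ψ

/-- `Π_I = {α_s : s ∈ I}`. -/
def PiI (I : Set B) : Set V := G.α '' I

/-- `Φ_J = Φ ∩ span(Π_J)`. -/
def PhiIn (J : Set B) : Set V := G.Phi ∩ (Submodule.span ℝ (G.PiI J) : Set V)

/-- `Φ_J^{⊥I}`: the roots of `Φ_J` orthogonal to all simple roots indexed by `I`. -/
def perpIn (J I : Set B) : Set V := {γ ∈ G.PhiIn J | ∀ s ∈ I, G.form γ (G.α s) = 0}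

/-- `Φ^{⊥I}`: the roots orthogonal to all simple roots indexed by `I`. -/
def perp (I : Set B) : Set V := {γ ∈ G.Phi | ∀ s ∈ I, G.form γ (G.α s) = 0}

/-- `W^{⊥I} = W(Φ^{⊥I})`. -/
def Wperp (I : Set B) : Subgroup W := G.WR (G.perp I)

/-- `R^I = S(Φ^{⊥I})`. -/
def RI (I : Set B) : Set W := G.SR (G.perp I)

/-- `Π^I = Π(Φ^{⊥I})`. -/
def PiPerp (I : Set B) : Set V := G.simpleSet (G.perp I)

/-- `C_I = {w ∈ W : w · α_s = α_s for all s ∈ I}`. -/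
def CI (I : Set B) : Set W := {w : W | ∀ s ∈ I, G.ρ w (G.α s) = G.α s}

/-- `Y_I = {w ∈ C_I : w · (Φ^{⊥I} ∩ Φ⁺) = Φ^{⊥I} ∩ Φ⁺}`. -/
def YI (I : Set B) : Set W :=
  {w ∈ G.CI I | (fun v => G.ρ w v) '' (G.perp I ∩ G.PhiPos) = G.perp I ∩ G.PhiPos}

/-- A root basis: a set of positive roots whose pairwise form values are governed by the
orders of the products of the corresponding reflections. -/
def IsRootBasis (Ψ : Set V) : Prop :=
  Ψ ⊆ G.PhiPos ∧ ∀ β ∈ Ψ, ∀ γ ∈ Ψ,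
    (orderOf (G.reflAlong β * G.reflAlong γ) ≠ 0 →
      G.form β γ = - Real.cos (Real.pi / (orderOf (G.reflAlong β * G.reflAlong γ) : ℝ))) ∧
    (orderOf (G.reflAlong β * G.reflAlong γ) = 0 → G.form β γ ≤ -1)

end GeomRep

/-- Adjacency in the Coxeter graph: distinct vertices with bond `m ≥ 3` (or `∞`, coded `0`). -/
def adj (M : CoxeterMatrix B) (a b : B) : Prop := a ≠ b ∧ M a b ≠ 2

/-- Connectivity within the subgraph of the Coxeter graph induced on `A`. -/
def connIn (M : CoxeterMatrix B) (A : Set B) (a b : B) : Prop :=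
  Relation.ReflTransGen (fun x y => x ∈ A ∧ y ∈ A ∧ adj M x y) a b

/-- `J_{∼K}`: the union of the connected components of the Coxeter graph induced on `J ∪ K`
that have nonempty intersection with `K`. -/
def compUnion (M : CoxeterMatrix B) (J K : Set B) : Set B :=
  {a ∈ J ∪ K | ∃ k ∈ K, connIn M (J ∪ K) a k}

/-- The connected component of `s` in the Coxeter graph induced on `I`. -/
def component (M : CoxeterMatrix B) (I : Set B) (s : B) : Set B := {t ∈ I | connIn M I s t}

/-- `A` is an irreducible component of `I`. -/
def IsComponent (M : CoxeterMatrix B) (I A : Set B) : Prop := ∃ s ∈ I, A = component M I s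

/-- `A` is a union of irreducible components of `I`. -/
def IsComponentUnion (M : CoxeterMatrix B) (I A : Set B) : Prop :=
  A ⊆ I ∧ ∀ a ∈ A, component M I a ⊆ A

variable (cs : CoxeterSystem M W)

/-- The standard parabolic subgroup `W_I`. -/
def par (I : Set B) : Subgroup W := Subgroup.closure (cs.simple '' I)

/-- `I` is of finite type if `W_I` is finite. -/
def finType (I : Set B) : Prop := (par cs I : Set W).Finite

/-- The longest element `w₀(I)` of a finite-type standard parabolic subgroup `W_I`. -/
def w0 (I : Set B) : W :=
  if h : ∃ w ∈ par cs I, ∀ u ∈ par cs I, cs.length u ≤ cs.length w then h.choose else 1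

/-- The element `ν = w₀(J_{∼s}) · w₀(J_{∼s} ∖ {s})`. -/
def nu (J : Set B) (s : B) : W :=
  w0 cs (compUnion M J {s}) * w0 cs (compUnion M J {s} \ {s})

/-- Adjacency of two reflections in the Coxeter graph of a reflection subgroup:
their product has order at least 3 (possibly infinite). -/
def cadj (r r' : W) : Prop := r ≠ r' ∧ r * r' ≠ r' * r

/-- Connectivity within the Coxeter graph on a set `R` of reflections. -/
def cconn (R : Set W) (a b : W) : Prop :=
  Relation.ReflTransGen (fun x y => x ∈ R ∧ y ∈ R ∧ cadj x y) a b

/-- The connected component of `r` in the Coxeter graph on `R`. -/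
def ccomp (R : Set W) (r : W) : Set W := {r' ∈ R | cconn R r r'}

/-- The product of all the irreducible components of finite type of the Coxeter system
with generating set `R`. -/
def finPart (R : Set W) : Subgroup W :=
  Subgroup.closure {r ∈ R | (Subgroup.closure (ccomp R r) : Set W).Finite}

/-- The product of all the irreducible components of non-finite type of the Coxeter system
with generating set `R`. -/
def infPart (R : Set W) : Subgroup W :=
  Subgroup.closure {r ∈ R | ¬ (Subgroup.closure (ccomp R r) : Set W).Finite}


variable (G : GeomRep M cs V)

/-- `Z(W_I)`: the center of the standard parabolic subgroup `W_I`, as a subset of `W`. -/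
def ZWI (I : Set B) : Set W := {w ∈ (par cs I : Set W) | ∀ u ∈ par cs I, w * u = u * w}

/-- `B̃_I = {w ∈ Z_W(W_I) : w · (Φ^{⊥I} ∩ Φ⁺) = Φ^{⊥I} ∩ Φ⁺}`. -/
def Btilde (I : Set B) : Set W :=
  {w ∈ (Subgroup.centralizer ((par cs I : Set W)) : Set W) |
    (fun v => G.ρ w v) '' (G.perp I ∩ G.PhiPos) = G.perp I ∩ G.PhiPos}

/-- A subset of `S` is irreducible if its induced Coxeter graph is connected. -/
def IsIrred (M : CoxeterMatrix B) (J : Set B) : Prop := ∀ a ∈ J, ∀ b ∈ J, connIn M J a b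

/-- An irreducible subset `J ⊆ S` of finite type is of `(-1)`-type if its longest element
`w₀(J)` maps every simple root `α_s`, `s ∈ J`, to `-α_s`. -/
def IsMinusOneType (J : Set B) : Prop :=
  IsIrred M J ∧ finType cs J ∧ ∀ s ∈ J, G.ρ (w0 cs J) (G.α s) = - G.α s

/-- `B_I`: the elements of `B̃_I` fixing every simple root `α_s` with `s ∈ I` lying in an
irreducible component of `I` of `(-1)`-type. -/
def BI (I : Set B) : Set W :=
  {w ∈ Btilde cs G I |
    ∀ s ∈ I, IsMinusOneType cs G (component M I s) → G.ρ w (G.α s) = G.α s}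

/-- `N_I = {w ∈ W : w · Π_I = Π_I}`. -/
def NIset (I : Set B) : Set W := {w : W | (fun v => G.ρ w v) '' G.PiI I = G.PiI I}

/-- `Ỹ_I = {w ∈ N_I : w · (Φ^{⊥I} ∩ Φ⁺) = Φ^{⊥I} ∩ Φ⁺}`. -/
def Ytilde (I : Set B) : Set W :=
  {w ∈ NIset cs G I | (fun v => G.ρ w v) '' (G.perp I ∩ G.PhiPos) = G.perp I ∩ G.PhiPos}

/-- `A` is (the vertex set of) a Coxeter graph of type `A_n` with `2 ≤ n < ∞`:
a finite path with `n ≥ 2` vertices, all of whose edges have label `3`. -/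
def IsTypeA (M : CoxeterMatrix B) (A : Set B) : Prop :=
  ∃ (n : ℕ) (e : Fin n → B), 2 ≤ n ∧ Function.Injective e ∧ Set.range e = A ∧
    ∀ k l : Fin n, M (e k) (e l) =
      if (k : ℕ) + 1 = l ∨ (l : ℕ) + 1 = k then 3 else if k = l then 1 else 2

/-- A standard expression `w = ν_m ⋯ ν_1` of `w` starting at `I`: a factorization of `w`
into elements `ν_k = w₀((I_{k-1})_{∼ s_k}) · w₀((I_{k-1})_{∼ s_k} ∖ {s_k})` with
`ν_k · Π_{I_{k-1}} = Π_{I_k}` and `ℓ(w) = Σ_k ℓ(ν_k)`. -/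
structure StdExpr (cs : CoxeterSystem M W) (G : GeomRep M cs V) (I : Set B) (w : W) :
    Type _ where
  m : ℕ
  Iseq : Fin (m + 1) → Set B
  sseq : Fin m → B
  base : Iseq 0 = I
  not_mem : ∀ k : Fin m, sseq k ∉ Iseq k.castSucc
  fin : ∀ k : Fin m, finType cs (compUnion M (Iseq k.castSucc) {sseq k})
  maps : ∀ k : Fin m,
    (fun v => G.ρ (nu cs (Iseq k.castSucc) (sseq k)) v) '' G.PiI (Iseq k.castSucc) =
      G.PiI (Iseq k.succ)
  prod_eq : w = (List.ofFn fun k : Fin m => nu cs (Iseq k.castSucc) (sseq k)).reverse.prod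
  len_eq : cs.length w = ∑ k : Fin m, cs.length (nu cs (Iseq k.castSucc) (sseq k))

/-- The factor `ν_k` of a standard expression is a loop if it fixes `Π_{I_{k-1}}` pointwise. -/
def StdExpr.IsLoop {cs : CoxeterSystem M W} {G : GeomRep M cs V} {I : Set B} {w : W}
    (E : StdExpr cs G I w) (k : Fin E.m) : Prop :=
  ∀ t ∈ E.Iseq k.castSucc,
    G.ρ (nu cs (E.Iseq k.castSucc) (E.sseq k)) (G.α t) = G.α t

/-- The product `ν_k ⋯ ν_1` of the first (rightmost) `k` factors of a standard expression. -/
def StdExpr.tail {cs : CoxeterSystem M W} {G : GeomRep M cs V} {I : Set B} {w : W}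
    (E : StdExpr cs G I w) (k : ℕ) : W :=
  ((List.ofFn fun j : Fin E.m => nu cs (E.Iseq j.castSucc) (E.sseq j)).take k).reverse.prod

/-! ### Auxiliary lemmas for Statement 1 -/

section Aux

variable {M' : CoxeterMatrix B} {cs' : CoxeterSystem M' W} (G' : GeomRep M' cs' V)


theorem aux_mul_apply (e₁ e₂ : V ≃ₗ[ℝ] V) (v : V) : (e₁ * e₂) v = e₁ (e₂ v) := rfl

theorem aux_rho_mul (a b : W) (v : V) :
    G'.ρ (a * b) v = G'.ρ a (G'.ρ b v) := by rw [map_mul]; rfl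

theorem aux_rho_inv_apply (a : W) (v : V) :
    G'.ρ a (G'.ρ a⁻¹ v) = v := by rw [← aux_rho_mul, mul_inv_cancel, map_one]; rfl

/-- The reflection along a root acts by the usual formula. -/
theorem aux_refl_apply {γ : V} (hγ : γ ∈ G'.Phi) (v : V) :
    G'.ρ (G'.reflAlong γ) v = v - (2 * G'.form γ v) • γ := by
  obtain ⟨w, i, hwi⟩ := id hγ
  rw [GeomRep.reflAlong, dif_pos hγ]
  set w' := hγ.choose with hw'
  set i' := hγ.choose_spec.choose with hi'
  have hwi' : G'.ρ w' (G'.α i') = γ := hγ.choose_spec.choose_spec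
  rw [aux_rho_mul, aux_rho_mul, G'.simple_act]
  have hform : G'.form (G'.α i') (G'.ρ w'⁻¹ v) = G'.form γ v := by
    conv_rhs => rw [← hwi', ← aux_rho_inv_apply G' w' v]
    rw [G'.invariant]
  rw [hform, map_sub, map_smul, aux_rho_inv_apply, hwi']

theorem aux_form_self {γ : V} (hγ : γ ∈ G'.Phi) :
    G'.form γ γ = 1 := by
  obtain ⟨w, i, hwi⟩ := hγ
  rw [← hwi, G'.invariant, G'.form_simple_fin i i (by rw [M'.diagonal]; exact one_ne_zero),
    M'.diagonal, Nat.cast_one, div_one, Real.cos_pi, neg_neg]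

theorem aux_phi_ne_zero {γ : V} (hγ : γ ∈ G'.Phi) : γ ≠ 0 := by
  obtain ⟨w, i, hwi⟩ := hγ
  rw [← hwi]
  simp only [ne_eq, LinearEquiv.map_eq_zero_iff]
  exact G'.indep.ne_zero i

/-- A linear functional positive on all positive roots. -/
def GeomRep.auxFun : V →ₗ[ℝ] ℝ := (Module.Basis.mk G'.indep G'.spans).sumCoords

theorem auxFun_pos {γ : V} (hγ : γ ∈ G'.PhiPos) : 0 < G'.auxFun γ := by
  obtain ⟨hΦ, c, hc, hγc⟩ := hγ
  set b := Module.Basis.mk G'.indep G'.spans with hb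
  have hγc' : γ = Finsupp.linearCombination ℝ (⇑b) c := by
    rw [Finsupp.linearCombination_apply, hγc]
    exact Finsupp.sum_congr fun i _ => by rw [hb, Module.Basis.mk_apply]
  have hrepr : b.repr γ = c := by rw [hγc', b.repr_linearCombination]
  have hne : c ≠ 0 := by
    intro h
    exact aux_phi_ne_zero G' hΦ (by rw [hγc, h, Finsupp.sum_zero_index])
  have h5 : G'.auxFun γ = (b.repr γ).sum fun _ => id := by
    rw [GeomRep.auxFun, ← hb]
    exact congrFun (Module.Basis.coe_sumCoords b) γ
  rw [h5, hrepr, Finsupp.sum]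
  simp only [id]
  apply Finset.sum_pos
  · intro i hi
    exact lt_of_le_of_ne (hc i) (Ne.symm (Finsupp.mem_support_iff.mp hi))
  · exact Finsupp.support_nonempty_iff.mpr hne

theorem aux_reflAlong_injOn {β γ : V}
    (hβ : β ∈ G'.PhiPos) (hγ : γ ∈ G'.PhiPos) (h : G'.reflAlong β = G'.reflAlong γ) :
    β = γ := by
  have h1 := aux_refl_apply G' hβ.1 γ
  have h2 := aux_refl_apply G' hγ.1 γ
  rw [h, h2, aux_form_self G' hγ.1] at h1
  -- h1 : γ - (2 * 1) • γ = γ - (2 * form β γ) • β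
  have hgb : γ = G'.form β γ • β := by
    have h3 := sub_right_injective h1
    rw [mul_one, mul_smul] at h3
    exact smul_right_injective V two_ne_zero h3
  have hsq : G'.form β γ * G'.form β γ = 1 := by
    have h4 := aux_form_self G' hγ.1
    rw [hgb] at h4
    simpa only [map_smul, LinearMap.smul_apply, smul_eq_mul,
      aux_form_self G' hβ.1, mul_one] using h4
  rcases mul_self_eq_one_iff.mp hsq with h5 | h5
  · rw [hgb, h5, one_smul]
  · exfalso
    have hfg := auxFun_pos G' hγ
    rw [hgb, h5, map_smul] at hfg
    have hfb := auxFun_pos G' hβ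
    simp only [smul_eq_mul, neg_one_mul] at hfg
    linarith


theorem aux_refl_sq {γ : V} (hγ : γ ∈ G'.Phi) :
    G'.reflAlong γ * G'.reflAlong γ = 1 := by
  apply G'.faithful
  rw [map_one]
  refine LinearEquiv.ext fun v => ?_
  have h1 : (1 : V ≃ₗ[ℝ] V) v = v := rfl
  rw [h1, aux_rho_mul, aux_refl_apply G' hγ, aux_refl_apply G' hγ, map_sub, map_smul,
    smul_eq_mul, aux_form_self G' hγ]
  set c := G'.form γ v with hc
  have : (2 * (c - 2 * c * 1)) = -(2 * c) := by ring
  rw [this, neg_smul, sub_neg_eq_add, sub_add_cancel]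

theorem aux_orderOf_ne_zero {H : Subgroup W} (hfin : (H : Set W).Finite) {x : W}
    (hx : x ∈ H) : orderOf x ≠ 0 := by
  haveI : Finite H := hfin.to_subtype
  have h1 : orderOf (⟨x, hx⟩ : H) ≠ 0 := (orderOf_pos _).ne'
  rwa [Subgroup.orderOf_mk x hx] at h1

theorem aux_form_nonpos {Ψ : Set V} (hpos : Ψ ⊆ G'.PhiPos)
    (hrb : G'.IsRootBasis Ψ) (hfin : ((G'.WR Ψ : Subgroup W) : Set W).Finite)
    {β γ : V} (hβ : β ∈ Ψ) (hγ : γ ∈ Ψ) (hne : β ≠ γ) : G'.form β γ ≤ 0 := by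
  have hmemβ : G'.reflAlong β ∈ G'.WR Ψ :=
    Subgroup.subset_closure (Set.mem_image_of_mem _ hβ)
  have hmemγ : G'.reflAlong γ ∈ G'.WR Ψ :=
    Subgroup.subset_closure (Set.mem_image_of_mem _ hγ)
  have hm0 : orderOf (G'.reflAlong β * G'.reflAlong γ) ≠ 0 :=
    aux_orderOf_ne_zero hfin (mul_mem hmemβ hmemγ)
  have hm1 : orderOf (G'.reflAlong β * G'.reflAlong γ) ≠ 1 := by
    intro h
    have h2 : G'.reflAlong β * G'.reflAlong γ = 1 := orderOf_eq_one_iff.mp h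
    have h3 : G'.reflAlong β = G'.reflAlong γ := by
      have h4 := aux_refl_sq G' (hpos hγ).1
      calc G'.reflAlong β = G'.reflAlong β * (G'.reflAlong γ * G'.reflAlong γ) := by
            rw [h4, mul_one]
        _ = (G'.reflAlong β * G'.reflAlong γ) * G'.reflAlong γ := by rw [mul_assoc]
        _ = G'.reflAlong γ := by rw [h2, one_mul]
    exact hne (aux_reflAlong_injOn G' (hpos hβ) (hpos hγ) h3)
  rw [((hrb.2 β hβ γ hγ).1 hm0)]
  have h2m : (2 : ℝ) ≤ (orderOf (G'.reflAlong β * G'.reflAlong γ) : ℝ) := by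
    have : 2 ≤ orderOf (G'.reflAlong β * G'.reflAlong γ) := by omega
    exact_mod_cast this
  simp only [neg_nonpos]
  apply Real.cos_nonneg_of_mem_Icc
  constructor
  · have := Real.pi_pos
    have h0 : (0:ℝ) < (orderOf (G'.reflAlong β * G'.reflAlong γ) : ℝ) := by linarith
    have : 0 ≤ Real.pi / (orderOf (G'.reflAlong β * G'.reflAlong γ) : ℝ) :=
      le_of_lt (div_pos Real.pi_pos h0)
    linarith [Real.pi_pos, this]
  · rw [div_le_div_iff₀ (by linarith) (by norm_num : (0:ℝ) < 2)]
    nlinarith [Real.pi_pos]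

set_option maxHeartbeats 1000000 in
theorem aux_posdef {Ψ : Set V} (hpos : Ψ ⊆ G'.PhiPos)
    (hfin : ((G'.WR Ψ : Subgroup W) : Set W).Finite) :
    ∀ v ∈ Submodule.span ℝ Ψ, v ≠ 0 → 0 < G'.form v v := by
  classical
  -- `Ψ` is finite
  have hΨfin : Ψ.Finite := by
    have hsub : G'.reflAlong '' Ψ ⊆ ((G'.WR Ψ : Subgroup W) : Set W) := by
      rintro _ ⟨γ, hγ, rfl⟩
      exact Subgroup.subset_closure (Set.mem_image_of_mem _ hγ)
    exact Set.Finite.of_finite_image (hfin.subset hsub)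
      (fun a ha b hb h => aux_reflAlong_injOn G' (hpos ha) (hpos hb) h)
  set U : Submodule ℝ V := Submodule.span ℝ Ψ with hU
  haveI : FiniteDimensional ℝ U := FiniteDimensional.span_of_finite ℝ hΨfin
  obtain ⟨U', hcompl⟩ := Submodule.exists_isCompl U
  set p : V →ₗ[ℝ] U := U.linearProjOfIsCompl U' hcompl with hp
  have hpU : ∀ u : U, p ↑u = u :=
    fun u => Submodule.linearProjOfIsCompl_apply_left hcompl u
  set b0 := Module.finBasis ℝ U with hb0
  set B0 : U →ₗ[ℝ] U →ₗ[ℝ] ℝ :=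
    ∑ i, LinearMap.smulRight (b0.coord i) (b0.coord i) with hB0
  have hB0app : ∀ u v : U, B0 u v = ∑ i, b0.coord i u * b0.coord i v := by
    intro u v
    rw [hB0]
    simp [LinearMap.sum_apply, LinearMap.smulRight_apply, smul_eq_mul]
  have hB0nonneg : ∀ u, 0 ≤ B0 u u := by
    intro u
    rw [hB0app]
    exact Finset.sum_nonneg fun i _ => mul_self_nonneg _
  have hB0pos : ∀ u : U, u ≠ 0 → 0 < B0 u u := by
    intro u hu
    have h1 : ∃ i, b0.coord i u ≠ 0 := by
      by_contra h
      push_neg at h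
      apply hu
      have h2 : b0.repr u = 0 := Finsupp.ext fun i => h i
      exact (LinearEquiv.map_eq_zero_iff _).mp h2
    obtain ⟨i, hi⟩ := h1
    rw [hB0app]
    exact Finset.sum_pos' (fun j _ => mul_self_nonneg _)
      ⟨i, Finset.mem_univ i, mul_self_pos.mpr hi⟩
  set Hfin := hfin.toFinset with hHfin
  set Q : V →ₗ[ℝ] V →ₗ[ℝ] ℝ :=
    ∑ w ∈ Hfin, (B0.compl₁₂ (p ∘ₗ (G'.ρ w).toLinearMap) (p ∘ₗ (G'.ρ w).toLinearMap)) with hQ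
  have hQapp : ∀ x y, Q x y = ∑ w ∈ Hfin, B0 (p (G'.ρ w x)) (p (G'.ρ w y)) := by
    intro x y
    rw [hQ]
    simp [LinearMap.sum_apply, LinearMap.compl₁₂_apply]
  have hQsymm : ∀ x y, Q x y = Q y x := by
    intro x y
    rw [hQapp, hQapp]
    refine Finset.sum_congr rfl fun w _ => ?_
    rw [hB0app, hB0app]
    exact Finset.sum_congr rfl fun i _ => mul_comm _ _
  have hQposU : ∀ u : U, (u : V) ≠ 0 → 0 < Q ↑u ↑u := by
    intro u hu
    rw [hQapp]
    refine Finset.sum_pos' (fun w _ => hB0nonneg _) ⟨1, ?_, ?_⟩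
    · rw [hHfin, Set.Finite.mem_toFinset]
      exact (G'.WR Ψ).one_mem
    · have h1 : G'.ρ 1 (u : V) = (u : V) := by rw [map_one]; rfl
      rw [h1, hpU]
      exact hB0pos u (fun h => hu (by rw [h]; rfl))
  have hQinv : ∀ g ∈ G'.WR Ψ, ∀ x y, Q (G'.ρ g x) (G'.ρ g y) = Q x y := by
    intro g hg x y
    rw [hQapp, hQapp]
    refine Finset.sum_nbij' (fun w => w * g) (fun w => w * g⁻¹) ?_ ?_ ?_ ?_ ?_
    · intro a ha
      rw [hHfin, Set.Finite.mem_toFinset] at ha ⊢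
      exact mul_mem ha hg
    · intro a ha
      rw [hHfin, Set.Finite.mem_toFinset] at ha ⊢
      exact mul_mem ha (inv_mem hg)
    · intro a _; group
    · intro a _; group
    · intro a _
      rw [← aux_rho_mul, ← aux_rho_mul]
  have hKI : ∀ γ ∈ Ψ, ∀ v : V, Q γ v = G'.form γ v * Q γ γ := by
    intro γ hγ v
    have hγΦ : γ ∈ G'.Phi := (hpos hγ).1
    have hinv := hQinv (G'.reflAlong γ)
      (Subgroup.subset_closure (Set.mem_image_of_mem _ hγ)) γ v
    rw [aux_refl_apply G' hγΦ, aux_refl_apply G' hγΦ, aux_form_self G' hγΦ] at hinv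
    have h2 : γ - (2 * 1 : ℝ) • γ = -γ := by
      rw [mul_one, two_smul]; abel
    rw [h2] at hinv
    have e1 : Q (-γ) (v - (2 * G'.form γ v) • γ)
        = -(Q γ v) + (2 * G'.form γ v) * Q γ γ := by
      rw [map_neg, LinearMap.neg_apply, map_sub, map_smul, smul_eq_mul]
      ring
    rw [e1] at hinv
    linarith
  -- inner product space structure on `U` given by `Q`
  let core : InnerProductSpace.Core ℝ U :=
    { inner := fun u v => Q ↑u ↑v
      conj_inner_symm := fun u v => by simpa using hQsymm ↑v ↑u
      re_inner_nonneg := fun u => by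
        rcases eq_or_ne (u : V) 0 with h | h
        · simp [h]
        · simpa using le_of_lt (hQposU u h)
      add_left := fun u v w => by simp [Submodule.coe_add, map_add, LinearMap.add_apply]
      smul_left := fun u v r => by
        simp [Submodule.coe_smul, map_smul, LinearMap.smul_apply, smul_eq_mul]
      definite := fun u h => by
        by_contra hne
        have h2 : (u : V) ≠ 0 := fun hc => hne (by exact_mod_cast Subtype.ext hc)
        exact absurd h (ne_of_gt (hQposU u h2)) }
  letI : NormedAddCommGroup U := @InnerProductSpace.Core.toNormedAddCommGroup ℝ U _ _ _ core
  letI : InnerProductSpace ℝ U := InnerProductSpace.ofCore core.toCore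
  haveI : CompleteSpace U := FiniteDimensional.complete ℝ U
  have hinner : ∀ u v : U, (inner ℝ u v : ℝ) = Q ↑u ↑v := fun u v => rfl
  -- the operator `T` representing the restricted form
  set Bres : U →ₗ[ℝ] U →ₗ[ℝ] ℝ := G'.form.compl₁₂ U.subtype U.subtype with hBres
  have hBresapp : ∀ u v : U, Bres u v = G'.form ↑u ↑v := fun u v => rfl
  set T : U →ₗ[ℝ] U :=
    { toFun := fun u => (InnerProductSpace.toDual ℝ U).symm
        (LinearMap.toContinuousLinearMap (Bres u))
      map_add' := fun u v => by simp only [map_add]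
      map_smul' := fun r u => by simp only [map_smul, RingHom.id_apply] } with hT
  have hTinner : ∀ u v : U, (inner ℝ (T u) v : ℝ) = Bres u v := by
    intro u v
    rw [← InnerProductSpace.toDual_apply_apply]
    rw [hT]
    simp only [LinearMap.coe_mk, AddHom.coe_mk]
    rw [LinearIsometryEquiv.apply_symm_apply]
    rfl
  have hTsymm : T.IsSymmetric := by
    intro u v
    have h := hTinner v u
    rw [hBresapp] at h
    rw [hTinner, hBresapp, G'.symm, ← h, real_inner_comm]
  -- each element of `Ψ` is an eigenvector of `T` with positive eigenvalue
  have hQγpos : ∀ γ ∈ Ψ, (0:ℝ) < Q γ γ := by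
    intro γ hγ
    have := hQposU ⟨γ, Submodule.subset_span hγ⟩ (aux_phi_ne_zero G' (hpos hγ).1)
    simpa using this
  have heig : ∀ γ (hγ : γ ∈ Ψ),
      T ⟨γ, Submodule.subset_span hγ⟩ = (Q γ γ)⁻¹ • (⟨γ, Submodule.subset_span hγ⟩ : U) := by
    intro γ hγ
    apply ext_inner_right ℝ
    intro v
    rw [hTinner, hBresapp]
    rw [real_inner_smul_left, hinner]
    have hK := hKI γ hγ ↑v
    have hpos' := hQγpos γ hγ
    field_simp
    linarith [hK]
  -- the span of `Ψ` inside `U` is everything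
  have hspan : Submodule.span ℝ {u : U | (u : V) ∈ Ψ} = ⊤ := by
    apply Submodule.map_injective_of_injective (Submodule.injective_subtype U)
    rw [Submodule.map_span, Submodule.map_subtype_top]
    have himg : U.subtype '' {u : U | (u : V) ∈ Ψ} = Ψ := by
      ext x
      constructor
      · rintro ⟨u, hu, rfl⟩; exact hu
      · intro hx; exact ⟨⟨x, Submodule.subset_span hx⟩, hx, rfl⟩
    rw [himg, hU]
  -- spectral theorem
  set n := Module.finrank ℝ U with hn
  set eb := hTsymm.eigenvectorBasis (hn.symm) with heb
  set ev := hTsymm.eigenvalues (hn.symm) with hev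
  have hTeb : ∀ i, T (eb i) = ev i • eb i := by
    intro i
    have := hTsymm.hasEigenvector_eigenvectorBasis hn.symm i
    have h2 := this.1
    rw [Module.End.mem_eigenspace_iff] at h2
    exact h2
  have hevpos : ∀ i, 0 < ev i := by
    intro i
    by_contra hle
    push_neg at hle
    have horth : ∀ γ (hγ : γ ∈ Ψ), (inner ℝ (eb i) (⟨γ, Submodule.subset_span hγ⟩ : U) : ℝ) = 0 := by
      intro γ hγ
      have h1 : (inner ℝ (T (eb i)) (⟨γ, Submodule.subset_span hγ⟩ : U) : ℝ)
          = ev i * inner ℝ (eb i) (⟨γ, Submodule.subset_span hγ⟩ : U) := by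
        rw [hTeb, real_inner_smul_left]
      have h2 : (inner ℝ (T (eb i)) (⟨γ, Submodule.subset_span hγ⟩ : U) : ℝ)
          = (Q γ γ)⁻¹ * inner ℝ (eb i) (⟨γ, Submodule.subset_span hγ⟩ : U) := by
        rw [hTsymm (eb i) _, heig γ hγ, real_inner_smul_right]
      have h3 : (0:ℝ) < (Q γ γ)⁻¹ := inv_pos.mpr (hQγpos γ hγ)
      by_contra hne
      have : ev i = (Q γ γ)⁻¹ := by
        have := h1.symm.trans h2
        exact mul_right_cancel₀ hne this
      linarith
    have hz : ∀ v : U, (inner ℝ (eb i) v : ℝ) = 0 := by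
      intro v
      have hv : v ∈ Submodule.span ℝ {u : U | (u : V) ∈ Ψ} := by
        rw [hspan]; trivial
      refine Submodule.span_induction ?_ ?_ ?_ ?_ hv
      · intro x hx
        have h := horth ↑x hx
        have hh : (⟨(x : V), Submodule.subset_span hx⟩ : U) = x := Subtype.ext rfl
        rwa [hh] at h
      · simp
      · intro x y _ _ hx hy
        rw [inner_add_right, hx, hy, add_zero]
      · intro a x _ hx
        rw [real_inner_smul_right, hx, mul_zero]
    have h1 : (inner ℝ (eb i) (eb i) : ℝ) = 0 := hz (eb i)
    have h2 : eb i ≠ 0 := by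
      have := eb.toBasis.ne_zero i
      simpa using this
    exact h2 (inner_self_eq_zero.mp h1)
  -- conclude positive definiteness
  intro v hv hvne
  set v' : U := ⟨v, hv⟩ with hv'
  have hv'ne : v' ≠ 0 := fun h => hvne (by
    rw [show v = (v' : V) from rfl, h, Submodule.coe_zero])
  have hform : G'.form v v = inner ℝ (T v') v' := by rw [hTinner, hBresapp]
  rw [hform]
  have hexp : (inner ℝ (T v') v' : ℝ) = ∑ j, ev j * (eb.repr v' j * eb.repr v' j) := by
    nth_rewrite 1 [← eb.sum_repr v']
    rw [map_sum, sum_inner]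
    refine Finset.sum_congr rfl fun j _ => ?_
    rw [map_smul, real_inner_smul_left, hTeb, real_inner_smul_left,
      ← eb.repr_apply_apply v' j]
    ring
  rw [hexp]
  have hj : ∃ j, eb.repr v' j ≠ 0 := by
    by_contra h
    push_neg at h
    apply hv'ne
    have := eb.sum_repr v'
    rw [← this]
    exact Finset.sum_eq_zero fun j _ => by rw [h j, zero_smul]
  obtain ⟨j, hj⟩ := hj
  refine Finset.sum_pos' (fun k _ => mul_nonneg (le_of_lt (hevpos k)) (mul_self_nonneg _))
    ⟨j, Finset.mem_univ j, mul_pos (hevpos j) (mul_self_pos.mpr hj)⟩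


set_option maxHeartbeats 1000000 in
theorem aux_indep {Ψ : Set V} (hpos : Ψ ⊆ G'.PhiPos) (hrb : G'.IsRootBasis Ψ)
    (hfin : ((G'.WR Ψ : Subgroup W) : Set W).Finite) :
    LinearIndependent ℝ (fun γ : Ψ => (γ : V)) := by
  classical
  have hΨfin : Ψ.Finite := by
    have hsub : G'.reflAlong '' Ψ ⊆ ((G'.WR Ψ : Subgroup W) : Set W) := by
      rintro _ ⟨γ, hγ, rfl⟩
      exact Subgroup.subset_closure (Set.mem_image_of_mem _ hγ)
    exact Set.Finite.of_finite_image (hfin.subset hsub)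
      (fun a ha b hb h => aux_reflAlong_injOn G' (hpos ha) (hpos hb) h)
  haveI : Fintype Ψ := hΨfin.fintype
  rw [Fintype.linearIndependent_iff]
  intro g hg
  set P : Finset Ψ := Finset.univ.filter (fun i => 0 < g i) with hP
  set Pc : Finset Ψ := Finset.univ.filter (fun i => ¬ 0 < g i) with hPc
  set u : V := ∑ i ∈ P, g i • (i : V) with hu
  have hsplit : (∑ i ∈ P, g i • (i : V)) + ∑ i ∈ Pc, g i • (i : V) = 0 := by
    rw [hP, hPc, Finset.sum_filter_add_sum_filter_not]
    exact hg
  have hu2 : u = ∑ i ∈ Pc, (-g i) • (i : V) := by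
    have h1 : u = -∑ i ∈ Pc, g i • (i : V) := eq_neg_of_add_eq_zero_left hsplit
    rw [h1]
    simp [neg_smul]
  have hform_le : G'.form u u ≤ 0 := by
    have hexp : G'.form u u = ∑ i ∈ P, ∑ j ∈ Pc, (g i * -g j) * G'.form (i:V) (j:V) := by
      nth_rewrite 2 [hu2]
      nth_rewrite 1 [hu]
      simp only [map_sum, map_smul, LinearMap.sum_apply, LinearMap.smul_apply,
        smul_eq_mul, Finset.mul_sum]
      rw [Finset.sum_comm]
      refine Finset.sum_congr rfl fun i _ => Finset.sum_congr rfl fun j _ => by ring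
    rw [hexp]
    refine Finset.sum_nonpos fun i hi => Finset.sum_nonpos fun j hj => ?_
    have hgi : 0 < g i := (Finset.mem_filter.mp hi).2
    have hgj : ¬ 0 < g j := (Finset.mem_filter.mp hj).2
    have hij : (i : V) ≠ (j : V) := by
      intro h
      have h2 : i = j := Subtype.coe_injective h
      rw [h2] at hgi
      exact hgj hgi
    have hfo : G'.form (i:V) (j:V) ≤ 0 := aux_form_nonpos G' hpos hrb hfin i.2 j.2 hij
    have hnn : 0 ≤ g i * -g j :=
      mul_nonneg (le_of_lt hgi) (by linarith [le_of_not_gt hgj])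
    exact mul_nonpos_of_nonneg_of_nonpos hnn hfo
  have humem : u ∈ Submodule.span ℝ Ψ := by
    rw [hu]
    exact Submodule.sum_mem _ fun i _ => Submodule.smul_mem _ _ (Submodule.subset_span i.2)
  have hu0 : u = 0 := by
    by_contra h
    exact absurd hform_le (not_le.mpr (aux_posdef G' hpos hfin u humem h))
  have hPzero : ∀ i ∈ P, g i = 0 := by
    have hf0 : ∑ i ∈ P, g i * G'.auxFun (i:V) = 0 := by
      have h1 : G'.auxFun u = 0 := by rw [hu0, map_zero]
      rw [hu, map_sum] at h1
      simpa [map_smul, smul_eq_mul] using h1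
    have h2 := (Finset.sum_eq_zero_iff_of_nonneg (fun i hi =>
      mul_nonneg (le_of_lt (Finset.mem_filter.mp hi).2)
        (le_of_lt (auxFun_pos G' (hpos i.2))))).mp hf0
    intro i hi
    exact (mul_eq_zero.mp (h2 i hi)).resolve_right (ne_of_gt (auxFun_pos G' (hpos i.2)))
  have hPczero : ∀ i ∈ Pc, g i = 0 := by
    have hf0 : ∑ i ∈ Pc, (-g i) * G'.auxFun (i:V) = 0 := by
      have h1 : G'.auxFun u = 0 := by rw [hu0, map_zero]
      rw [hu2, map_sum] at h1
      simpa [map_smul, smul_eq_mul] using h1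
    have h2 := (Finset.sum_eq_zero_iff_of_nonneg (fun i hi =>
      mul_nonneg (by linarith [le_of_not_gt (Finset.mem_filter.mp hi).2])
        (le_of_lt (auxFun_pos G' (hpos i.2))))).mp hf0
    intro i hi
    have h3 := (mul_eq_zero.mp (h2 i hi)).resolve_right (ne_of_gt (auxFun_pos G' (hpos i.2)))
    linarith
  intro i
  by_cases h : 0 < g i
  · exact hPzero i (Finset.mem_filter.mpr ⟨Finset.mem_univ i, h⟩)
  · exact hPczero i (Finset.mem_filter.mpr ⟨Finset.mem_univ i, h⟩)

end Aux

/-- Corollary on finite-type root bases. Let `Ψ ⊆ Φ⁺` be a root basis such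
that `W(Ψ)` is finite. Then `Ψ` is linearly independent and the bilinear form restricted to
`span(Ψ)` is positive definite. -/
theorem statement_1 (Ψ : Set V) (hpos : Ψ ⊆ G.PhiPos) (hrb : G.IsRootBasis Ψ)
    (hfin : ((G.WR Ψ : Subgroup W) : Set W).Finite) :
    LinearIndependent ℝ (fun γ : Ψ => (γ : V)) ∧
    ∀ v ∈ Submodule.span ℝ Ψ, v ≠ 0 → 0 < G.form v v :=
  ⟨aux_indep G hpos hrb hfin, aux_posdef G hpos hfin⟩
end CoxCentralizer
end
end

section
/- Let w ∈ W and J,K ⊆ S, and suppose that w·Π_J ⊆ Π and w·Π_K ⊆ Φ⁻. Then J ∩ K = ∅, the set J_{∼K} is of finite type, and ν = w₀(J_{∼K})·w₀(J_{∼K}∖K) is a right divisor of w, i.e. ℓ(w) = ℓ(wν⁻¹) + ℓ(ν). -/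
noncomputable section

namespace CoxCentralizer

open Classical

variable {B : Type*} {W : Type*} [Group W] {V : Type*} [AddCommGroup V] [Module ℝ V]

variable {M : CoxeterMatrix B} {cs : CoxeterSystem M W}

variable (cs : CoxeterSystem M W)

variable (G : GeomRep M cs V)

/-! ### Auxiliary development for `statement_4` -/

section Statement4Aux

namespace GeomRep

variable {cs}

attribute [local instance] Classical.propDecidable

/-- The simple roots form a basis. -/
noncomputable def bas : Module.Basis B ℝ V := Module.Basis.mk G.indep G.spans

@[simp] theorem bas_apply (i : B) : G.bas i = G.α i := Module.Basis.mk_apply _ _ i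

theorem rho_mul_apply (u v : W) (x : V) : G.ρ (u * v) x = G.ρ u (G.ρ v x) := by
  rw [map_mul]; rfl

@[simp] theorem rho_one_apply (x : V) : G.ρ 1 x = x := by rw [map_one]; rfl

@[simp] theorem rho_inv_apply (u : W) (x : V) : G.ρ u (G.ρ u⁻¹ x) = x := by
  rw [← G.rho_mul_apply, mul_inv_cancel, rho_one_apply]

@[simp] theorem rho_inv_apply' (u : W) (x : V) : G.ρ u⁻¹ (G.ρ u x) = x := by
  rw [← G.rho_mul_apply, inv_mul_cancel, rho_one_apply]

theorem rho_injective (u : W) : Function.Injective (fun x => G.ρ u x) := by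
  intro x y h
  simpa using congrArg (fun z => G.ρ u⁻¹ z) h

@[simp] theorem repr_alpha (i : B) : G.bas.repr (G.α i) = Finsupp.single i 1 := by
  rw [← G.bas_apply i]; exact G.bas.repr_self i

theorem form_alpha_self (i : B) : G.form (G.α i) (G.α i) = 1 := by
  have h1 : M i i = 1 := M.diagonal i
  have := G.form_simple_fin i i (by rw [h1]; norm_num)
  rw [h1] at this
  simp only [Nat.cast_one, div_one, Real.cos_pi] at this
  rw [this]; norm_num

theorem form_self_eq_one {γ : V} (hγ : γ ∈ G.Phi) : G.form γ γ = 1 := by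
  obtain ⟨w, i, rfl⟩ := hγ
  rw [G.invariant]; exact G.form_alpha_self i

theorem zero_not_mem_Phi : (0 : V) ∉ G.Phi := by
  intro h
  have := G.form_self_eq_one h
  simp at this

theorem ne_zero_of_mem_Phi {γ : V} (hγ : γ ∈ G.Phi) : γ ≠ 0 := by
  rintro rfl; exact G.zero_not_mem_Phi hγ

theorem rho_mem_Phi {γ : V} (u : W) (hγ : γ ∈ G.Phi) : G.ρ u γ ∈ G.Phi := by
  obtain ⟨w, i, rfl⟩ := hγ
  exact ⟨u * w, i, by rw [G.rho_mul_apply]⟩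

theorem rho_simple_apply (i : B) (v : V) :
    G.ρ (cs.simple i) v = v - (2 * G.form (G.α i) v) • G.α i := G.simple_act i v

theorem rho_simple_alpha (i : B) : G.ρ (cs.simple i) (G.α i) = - G.α i := by
  rw [G.rho_simple_apply, G.form_alpha_self]
  module

theorem neg_mem_Phi {γ : V} (hγ : γ ∈ G.Phi) : -γ ∈ G.Phi := by
  obtain ⟨w, i, rfl⟩ := hγ
  refine ⟨w * cs.simple i, i, ?_⟩
  rw [G.rho_mul_apply, G.rho_simple_alpha, map_neg]

/-- Membership in `Φ⁺` in terms of coordinates. -/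
theorem mem_phiPos_iff {γ : V} :
    γ ∈ G.PhiPos ↔ γ ∈ G.Phi ∧ ∀ i, 0 ≤ G.bas.repr γ i := by
  constructor
  · rintro ⟨hγ, c, hc, hsum⟩
    refine ⟨hγ, ?_⟩
    have : γ = Finsupp.linearCombination ℝ (⇑G.bas) c := by
      rw [hsum, Finsupp.linearCombination_apply]
      exact Finsupp.sum_congr (fun i _ => by rw [G.bas_apply])
    rw [this, G.bas.repr_linearCombination]
    exact hc
  · rintro ⟨hγ, hc⟩
    refine ⟨hγ, G.bas.repr γ, hc, ?_⟩
    conv_lhs => rw [← G.bas.linearCombination_repr γ]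
    rw [Finsupp.linearCombination_apply]
    exact Finsupp.sum_congr (fun i _ => by rw [G.bas_apply])

theorem mem_phiNeg_iff {γ : V} :
    γ ∈ G.PhiNeg ↔ -γ ∈ G.Phi ∧ ∀ i, G.bas.repr γ i ≤ 0 := by
  unfold PhiNeg
  rw [Set.mem_setOf_eq, G.mem_phiPos_iff]
  simp only [map_neg, Finsupp.coe_neg, Pi.neg_apply]
  constructor
  · rintro ⟨h1, h2⟩; exact ⟨h1, fun i => by linarith [h2 i]⟩
  · rintro ⟨h1, h2⟩; exact ⟨h1, fun i => by linarith [h2 i]⟩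

theorem mem_Phi_of_mem_phiNeg {γ : V} (h : γ ∈ G.PhiNeg) : γ ∈ G.Phi := by
  rw [G.mem_phiNeg_iff] at h
  have := G.neg_mem_Phi (cs := cs) h.1
  simpa using this

theorem mem_Phi_of_mem_phiPos {γ : V} (h : γ ∈ G.PhiPos) : γ ∈ G.Phi :=
  ((G.mem_phiPos_iff).mp h).1

theorem alpha_mem_phiPos (i : B) : G.α i ∈ G.PhiPos := by
  rw [G.mem_phiPos_iff]
  refine ⟨⟨1, i, by simp⟩, ?_⟩
  intro t
  rw [G.repr_alpha]
  rw [Finsupp.single_apply]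
  split <;> norm_num

theorem not_mem_phiPos_and_phiNeg {γ : V} (h1 : γ ∈ G.PhiPos) (h2 : γ ∈ G.PhiNeg) : False := by
  rw [G.mem_phiPos_iff] at h1
  rw [G.mem_phiNeg_iff] at h2
  have hz : γ = 0 := by
    have : G.bas.repr γ = 0 := by
      ext i
      exact le_antisymm (h2.2 i) (h1.2 i)
    simpa using congrArg (G.bas.repr.symm) this
  exact G.ne_zero_of_mem_Phi h1.1 hz

theorem neg_mem_phiNeg {γ : V} (h : γ ∈ G.PhiPos) : -γ ∈ G.PhiNeg := by
  unfold PhiNeg; simpa using h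

theorem neg_mem_phiPos {γ : V} (h : γ ∈ G.PhiNeg) : -γ ∈ G.PhiPos := h

theorem form_alpha_nonpos {i j : B} (h : i ≠ j) : G.form (G.α i) (G.α j) ≤ 0 := by
  rcases eq_or_ne (M i j) 0 with h0 | h0
  · rw [G.form_simple_inf i j h0]; norm_num
  · rw [G.form_simple_fin i j h0]
    have hne1 := M.off_diagonal i j h
    have h2 : 2 ≤ M i j := by omega
    have hp : (0:ℝ) < (M i j : ℝ) := by exact_mod_cast Nat.pos_of_ne_zero h0
    have hm : (2:ℝ) ≤ (M i j : ℝ) := by exact_mod_cast h2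
    have : 0 ≤ Real.cos (Real.pi / (M i j : ℝ)) := by
      apply Real.cos_nonneg_of_mem_Icc
      constructor
      · have : 0 ≤ Real.pi / (M i j : ℝ) := by positivity
        linarith [Real.pi_pos]
      · rw [div_le_div_iff₀ hp (by norm_num : (0:ℝ) < 2)]
        nlinarith [Real.pi_pos]
    linarith

theorem form_alpha_neg_of_adj {i j : B} (h : i ≠ j) (h2 : M i j ≠ 2) :
    G.form (G.α i) (G.α j) < 0 := by
  rcases eq_or_ne (M i j) 0 with h0 | h0
  · rw [G.form_simple_inf i j h0]; norm_num
  · rw [G.form_simple_fin i j h0]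
    have hne1 := M.off_diagonal i j h
    have h3 : 3 ≤ M i j := by omega
    have hp : (0:ℝ) < (M i j : ℝ) := by exact_mod_cast Nat.pos_of_ne_zero h0
    have hm : (3:ℝ) ≤ (M i j : ℝ) := by exact_mod_cast h3
    have : 0 < Real.cos (Real.pi / (M i j : ℝ)) := by
      apply Real.cos_pos_of_mem_Ioo
      constructor
      · have : 0 < Real.pi / (M i j : ℝ) := div_pos Real.pi_pos hp
        linarith [Real.pi_pos, this]
      · rw [div_lt_div_iff₀ hp (by norm_num : (0:ℝ) < 2)]
        nlinarith [Real.pi_pos]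
    linarith

/-- If `u` maps a simple root to a simple root, it conjugates the corresponding reflections. -/
theorem conj_simple_eq {u : W} {i j : B} (h : G.ρ u (G.α i) = G.α j) :
    u * cs.simple i * u⁻¹ = cs.simple j := by
  apply G.faithful
  apply LinearEquiv.toLinearMap_injective
  apply LinearMap.ext
  intro v
  show G.ρ (u * cs.simple i * u⁻¹) v = G.ρ (cs.simple j) v
  rw [G.rho_mul_apply, G.rho_mul_apply, G.rho_simple_apply, G.rho_simple_apply]
  have hform : G.form (G.α i) (G.ρ u⁻¹ v) = G.form (G.α j) v := by
    rw [← h, ← G.invariant u, G.rho_inv_apply]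
  rw [map_sub, map_smul, G.rho_inv_apply, hform, h]

end GeomRep

/-! ### Dihedral computations and the fundamental theorem -/

/-- Chebyshev-like quotient of sines. -/
noncomputable def SS (m k : ℕ) : ℝ :=
  Real.sin (k * (Real.pi / m)) / Real.sin (Real.pi / m)

theorem SS_zero (m : ℕ) : SS m 0 = 0 := by simp [SS]

theorem sin_pi_div_pos {m : ℕ} (hm : 2 ≤ m) : 0 < Real.sin (Real.pi / m) := by
  apply Real.sin_pos_of_pos_of_lt_pi
  · apply div_pos Real.pi_pos
    exact_mod_cast Nat.pos_of_ne_zero (by omega)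
  · have hm' : (1:ℝ) < (m:ℝ) := by exact_mod_cast (by omega : 1 < m)
    rw [div_lt_iff₀ (by linarith)]
    nlinarith [Real.pi_pos]

theorem SS_one {m : ℕ} (hm : 2 ≤ m) : SS m 1 = 1 := by
  have := sin_pi_div_pos hm
  simp only [SS, Nat.cast_one, one_mul]
  field_simp

theorem SS_rec {m : ℕ} (hm : 2 ≤ m) (q : ℕ) :
    SS m (q + 2) = 2 * Real.cos (Real.pi / m) * SS m (q + 1) - SS m q := by
  have hs := (sin_pi_div_pos hm).ne'
  set θ := Real.pi / m with hθ
  have h1 : ((q:ℝ) + 2) * θ = ((q:ℝ) + 1) * θ + θ := by ring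
  have h2 : (q:ℝ) * θ = ((q:ℝ) + 1) * θ - θ := by ring
  simp only [SS, ← hθ]
  push_cast
  rw [h1, h2, Real.sin_add, Real.sin_sub]
  field_simp
  ring

theorem SS_nonneg {m : ℕ} (hm : 2 ≤ m) {k : ℕ} (hk : k ≤ m) : 0 ≤ SS m k := by
  apply div_nonneg _ (sin_pi_div_pos hm).le
  apply Real.sin_nonneg_of_nonneg_of_le_pi
  · positivity
  · have hm0 : (0:ℝ) < (m:ℝ) := by exact_mod_cast (by omega : 0 < m)
    have : (k:ℝ) ≤ (m:ℝ) := by exact_mod_cast hk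
    calc (k:ℝ) * (Real.pi / m) ≤ (m:ℝ) * (Real.pi / m) := by
          apply mul_le_mul_of_nonneg_right this (by positivity)
      _ = Real.pi := by field_simp

namespace GeomRep

variable {cs}

theorem two_le_M {i j : B} (hij : i ≠ j) (hm : M i j ≠ 0) : 2 ≤ M i j := by
  have := M.off_diagonal i j hij
  omega

theorem mem_alternatingWord {i j : B} {p : ℕ} {t : B}
    (ht : t ∈ CoxeterSystem.alternatingWord i j p) : t = i ∨ t = j := by
  induction p with
  | zero => simp [CoxeterSystem.alternatingWord] at ht
  | succ p ih =>
    rw [CoxeterSystem.alternatingWord_succ'] at ht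
    rcases List.mem_cons.mp ht with h | h
    · split at h
      · right; exact h
      · left; exact h
    · exact ih h

/-- The explicit formula for the action of an alternating word on a simple root,
finite bond case. -/
theorem alt_formula_fin {i j : B} (hij : i ≠ j) (hm : M i j ≠ 0) (q : ℕ) :
    G.ρ (cs.wordProd (CoxeterSystem.alternatingWord i j q)) (G.α i) =
      (if Even q then SS (M i j) (q+1) else SS (M i j) q) • G.α i +
      (if Even q then SS (M i j) q else SS (M i j) (q+1)) • G.α j := by
  have h2 : 2 ≤ M i j := two_le_M hij hm
  have hfij : G.form (G.α i) (G.α j) = - Real.cos (Real.pi / (M i j : ℝ)) :=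
    G.form_simple_fin i j hm
  have hfji : G.form (G.α j) (G.α i) = - Real.cos (Real.pi / (M i j : ℝ)) := by
    rw [G.symm]; exact hfij
  induction q with
  | zero =>
    simp only [CoxeterSystem.alternatingWord, CoxeterSystem.wordProd_nil, G.rho_one_apply,
      if_pos (Even.zero), SS_zero, SS_one h2, zero_smul, one_smul, add_zero]
  | succ q ih =>
    rw [CoxeterSystem.alternatingWord_succ', CoxeterSystem.wordProd_cons, G.rho_mul_apply, ih]
    rcases Nat.even_or_odd q with hq | hq
    · have hq1 : ¬ Even (q + 1) := by simp [Nat.even_add_one, hq]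
      simp only [if_pos hq, if_neg hq1]
      rw [G.rho_simple_apply]
      rw [map_add, map_smul, map_smul]
      rw [smul_eq_mul, smul_eq_mul, G.form_alpha_self, hfji]
      have hrec : SS (M i j) (q + 1 + 1) =
          2 * Real.cos (Real.pi / (M i j : ℝ)) * SS (M i j) (q+1) - SS (M i j) q := by
        exact_mod_cast SS_rec h2 q
      rw [hrec]
      module
    · have hq' : ¬ Even q := Nat.not_even_iff_odd.2 hq
      have hq1 : Even (q + 1) := by simp [Nat.even_add_one, hq']
      simp only [if_neg hq', if_pos hq1]
      rw [G.rho_simple_apply]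
      rw [map_add, map_smul, map_smul]
      rw [smul_eq_mul, smul_eq_mul, G.form_alpha_self, hfij]
      have hrec : SS (M i j) (q + 1 + 1) =
          2 * Real.cos (Real.pi / (M i j : ℝ)) * SS (M i j) (q+1) - SS (M i j) q := by
        exact_mod_cast SS_rec h2 q
      rw [hrec]
      module

/-- The explicit formula, infinite bond case. -/
theorem alt_formula_inf {i j : B} (hm : M i j = 0) (q : ℕ) :
    G.ρ (cs.wordProd (CoxeterSystem.alternatingWord i j q)) (G.α i) =
      (if Even q then ((q:ℝ)+1) else (q:ℝ)) • G.α i +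
      (if Even q then (q:ℝ) else ((q:ℝ)+1)) • G.α j := by
  have hmji : M j i = 0 := by rw [M.symmetric]; exact hm
  have hfij : G.form (G.α i) (G.α j) = -1 := G.form_simple_inf i j hm
  have hfji : G.form (G.α j) (G.α i) = -1 := by rw [G.symm]; exact hfij
  induction q with
  | zero => simp [CoxeterSystem.alternatingWord]
  | succ q ih =>
    rw [CoxeterSystem.alternatingWord_succ', CoxeterSystem.wordProd_cons, G.rho_mul_apply, ih]
    rcases Nat.even_or_odd q with hq | hq
    · have hq1 : ¬ Even (q + 1) := by simp [Nat.even_add_one, hq]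
      simp only [if_pos hq, if_neg hq1]
      rw [G.rho_simple_apply, map_add, map_smul, map_smul,
        smul_eq_mul, smul_eq_mul, G.form_alpha_self, hfji]
      push_cast
      module
    · have hq' : ¬ Even q := Nat.not_even_iff_odd.2 hq
      have hq1 : Even (q + 1) := by simp [Nat.even_add_one, hq']
      simp only [if_neg hq', if_pos hq1]
      rw [G.rho_simple_apply, map_add, map_smul, map_smul,
        smul_eq_mul, smul_eq_mul, G.form_alpha_self, hfij]
      push_cast
      module

/-- Normal form: every `{i,j}`-word equals an alternating word of bounded length. -/
theorem alt_normal_form {i j : B} (hij : i ≠ j) (ω : List B)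
    (hω : ∀ t ∈ ω, t = i ∨ t = j) :
    ∃ p, p ≤ ω.length ∧ (M i j ≠ 0 → p ≤ M i j) ∧
      (cs.wordProd ω = cs.wordProd (CoxeterSystem.alternatingWord i j p) ∨
       cs.wordProd ω = cs.wordProd (CoxeterSystem.alternatingWord j i p)) := by
  induction ω with
  | nil =>
    exact ⟨0, by simp, fun _ => by omega, Or.inl (by simp [CoxeterSystem.alternatingWord])⟩
  | cons t ω ih =>
    obtain ⟨p, hp1, hp2, hor⟩ := ih (fun x hx => hω x (List.mem_cons_of_mem t hx))
    have ht := hω t (List.mem_cons_self)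
    have key : ∀ a b : B, a ≠ b → (t = a ∨ t = b) → (M a b ≠ 0 → p ≤ M a b) →
        ∃ q, q ≤ p + 1 ∧ (M a b ≠ 0 → q ≤ M a b) ∧
          (cs.simple t * cs.wordProd (CoxeterSystem.alternatingWord a b p) =
            cs.wordProd (CoxeterSystem.alternatingWord a b q) ∨
           cs.simple t * cs.wordProd (CoxeterSystem.alternatingWord a b p) =
            cs.wordProd (CoxeterSystem.alternatingWord b a q)) := by
      intro a b hab htab hpm
      rcases Nat.eq_zero_or_pos p with rfl | hppos
      · rcases htab with rfl | rfl
        · refine ⟨1, by omega, fun h => by have := two_le_M (M := M) hab h; omega, Or.inr ?_⟩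
          simp [CoxeterSystem.alternatingWord]
        · refine ⟨1, by omega, fun h => by have := two_le_M (M := M) hab h; omega, Or.inl ?_⟩
          simp [CoxeterSystem.alternatingWord]
      · obtain ⟨p', rfl⟩ : ∃ p', p = p' + 1 := ⟨p - 1, by omega⟩
        set c : B := if Even p' then b else a with hc
        have hsucc := CoxeterSystem.alternatingWord_succ' a b p'
        rcases eq_or_ne t c with rfl | htc
        · -- cancellation
          refine ⟨p', by omega, fun h => by have := hpm h; omega, Or.inl ?_⟩
          rw [hsucc, CoxeterSystem.wordProd_cons, ← mul_assoc, ← hc,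
            CoxeterSystem.simple_mul_simple_self, one_mul]
        · -- extension
          have htc' : t = (if Even (p' + 1) then b else a) := by
            rcases Nat.even_or_odd p' with hp | hp
            · have : c = b := by rw [hc, if_pos hp]
              have h1 : ¬ Even (p' + 1) := by simp [Nat.even_add_one, hp]
              rw [if_neg h1]
              rcases htab with rfl | rfl
              · rfl
              · exact absurd this.symm htc
            · have hp' : ¬ Even p' := Nat.not_even_iff_odd.2 hp
              have : c = a := by rw [hc, if_neg hp']
              have h1 : Even (p' + 1) := by simp [Nat.even_add_one, hp']
              rw [if_pos h1]
              rcases htab with rfl | rfl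
              · exact absurd this.symm htc
              · rfl
          have hext : cs.simple t * cs.wordProd (CoxeterSystem.alternatingWord a b (p' + 1)) =
              cs.wordProd (CoxeterSystem.alternatingWord a b (p' + 2)) := by
            rw [CoxeterSystem.alternatingWord_succ' a b (p' + 1), CoxeterSystem.wordProd_cons,
              ← htc']
          by_cases hM : M a b ≠ 0 ∧ p' + 2 > M a b
          · obtain ⟨hM0, hMgt⟩ := hM
            have h2M := two_le_M (M := M) hab hM0
            have hpM : p' + 1 = M a b := by have := hpm hM0; omega
            have hsub := cs.prod_alternatingWord_eq_prod_alternatingWord_sub a b (p' + 2)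
              (by omega)
            refine ⟨M a b * 2 - (p' + 2), by omega, fun _ => by omega, Or.inr ?_⟩
            rw [hext, hsub]
          · push_neg at hM
            refine ⟨p' + 2, by omega, fun h => hM h, Or.inl hext⟩
    rcases hor with h | h
    · obtain ⟨q, hq1, hq2, hor'⟩ := key i j hij ht hp2
      refine ⟨q, by simp; omega, hq2, ?_⟩
      rw [CoxeterSystem.wordProd_cons, h]
      exact hor'
    · have hp2' : M j i ≠ 0 → p ≤ M j i := by rw [M.symmetric j i]; exact hp2
      obtain ⟨q, hq1, hq2, hor'⟩ := key j i hij.symm (ht.symm) hp2'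
      have hq2' : M i j ≠ 0 → q ≤ M i j := by rw [M.symmetric i j]; exact hq2
      refine ⟨q, by simp; omega, hq2', ?_⟩
      rw [CoxeterSystem.wordProd_cons, h]
      exact hor'.symm

/-- The key dihedral positivity lemma. -/
theorem dihedral_nonneg {i j : B} (hij : i ≠ j) (ω : List B)
    (hω : ∀ t ∈ ω, t = i ∨ t = j)
    (hC : ∀ ω' : List B, (∀ t ∈ ω', t = i ∨ t = j) →
      cs.wordProd ω' = cs.wordProd ω * cs.simple i → ω.length < ω'.length) :
    ∃ a b : ℝ, 0 ≤ a ∧ 0 ≤ b ∧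
      G.ρ (cs.wordProd ω) (G.α i) = a • G.α i + b • G.α j := by
  obtain ⟨p, hp1, hp2, hor⟩ := alt_normal_form (cs := cs) hij ω hω
  have hji : ∀ (p' : ℕ), p' + 1 ≤ ω.length →
      cs.wordProd ω = cs.wordProd (CoxeterSystem.alternatingWord j i (p' + 1)) → False := by
    intro p' hp' h
    have hconcat : CoxeterSystem.alternatingWord j i (p' + 1) =
        (CoxeterSystem.alternatingWord i j p').concat i :=
      CoxeterSystem.alternatingWord_succ j i p'
    have : cs.wordProd (CoxeterSystem.alternatingWord i j p') = cs.wordProd ω * cs.simple i := by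
      rw [h, hconcat, CoxeterSystem.wordProd_concat, mul_assoc,
        CoxeterSystem.simple_mul_simple_self, mul_one]
    have hlt := hC _ (fun t htt => mem_alternatingWord htt) this
    rw [CoxeterSystem.length_alternatingWord] at hlt
    omega
  rcases hor with h | h
  · rcases Nat.eq_zero_or_pos p with rfl | hppos
    · refine ⟨1, 0, by norm_num, le_refl 0, ?_⟩
      simp only [CoxeterSystem.alternatingWord, CoxeterSystem.wordProd_nil] at h
      rw [h]
      simp
    · by_cases hM : M i j ≠ 0 ∧ p = M i j
      · exfalso
        obtain ⟨p', rfl⟩ : ∃ p', p = p' + 1 := ⟨p - 1, by omega⟩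
        apply hji p' (by omega)
        have hb := cs.wordProd_braidWord_eq i j
        simp only [CoxeterSystem.braidWord] at hb
        rw [M.symmetric j i] at hb
        rw [h, hM.2, hb]
      · push_neg at hM
        rcases eq_or_ne (M i j) 0 with hm0 | hm0
        · refine ⟨(if Even p then ((p:ℝ)+1) else (p:ℝ)), (if Even p then (p:ℝ) else ((p:ℝ)+1)),
            ?_, ?_, ?_⟩
          · split <;> positivity
          · split <;> positivity
          · rw [h]; exact G.alt_formula_inf hm0 p
        · have hpM : p + 1 ≤ M i j := by
            have := hp2 hm0
            have := hM hm0
            omega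
          have h2 := two_le_M (M := M) hij hm0
          refine ⟨(if Even p then SS (M i j) (p+1) else SS (M i j) p),
            (if Even p then SS (M i j) p else SS (M i j) (p+1)), ?_, ?_, ?_⟩
          · split
            · exact SS_nonneg h2 hpM
            · exact SS_nonneg h2 (by omega)
          · split
            · exact SS_nonneg h2 (by omega)
            · exact SS_nonneg h2 hpM
          · rw [h]; exact G.alt_formula_fin hij hm0 p
  · rcases Nat.eq_zero_or_pos p with rfl | hppos
    · refine ⟨1, 0, by norm_num, le_refl 0, ?_⟩
      simp only [CoxeterSystem.alternatingWord, CoxeterSystem.wordProd_nil] at h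
      rw [h]
      simp
    · exfalso
      obtain ⟨p', rfl⟩ : ∃ p', p = p' + 1 := ⟨p - 1, by omega⟩
      exact hji p' (by omega) h

/-- Stripping letters `i, j` from the right of `w`. -/
theorem strip (i j : B) : ∀ n (w : W), cs.length w = n →
    ∃ (u : W) (ω : List B), (∀ t ∈ ω, t = i ∨ t = j) ∧
      w = u * cs.wordProd ω ∧ cs.length w = cs.length u + ω.length ∧
      ¬ cs.IsRightDescent u i ∧ ¬ cs.IsRightDescent u j := by
  intro n
  induction n using Nat.strong_induction_on with
  | _ n ih =>
    intro w hw
    by_cases hd : cs.IsRightDescent w i ∨ cs.IsRightDescent w j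
    · obtain ⟨t, ht, hdt⟩ : ∃ t, (t = i ∨ t = j) ∧ cs.IsRightDescent w t := by
        rcases hd with h | h
        exacts [⟨i, Or.inl rfl, h⟩, ⟨j, Or.inr rfl, h⟩]
      have hpm := cs.length_mul_simple w t
      have hlt : cs.length (w * cs.simple t) < n := by
        have := hdt
        unfold CoxeterSystem.IsRightDescent at this
        omega
      obtain ⟨u, ω, hmem, hprod, hlen, hui, huj⟩ := ih _ hlt (w * cs.simple t) rfl
      refine ⟨u, ω ++ [t], ?_, ?_, ?_, hui, huj⟩
      · intro x hx
        rcases List.mem_append.mp hx with h | h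
        · exact hmem x h
        · rw [List.mem_singleton.mp h]; exact ht
      · rw [CoxeterSystem.wordProd_append, CoxeterSystem.wordProd_singleton, ← mul_assoc,
          ← hprod]
        rw [mul_assoc, CoxeterSystem.simple_mul_simple_self, mul_one]
      · have h1 : cs.length (w * cs.simple t) + 1 = cs.length w := by
          have := hdt
          unfold CoxeterSystem.IsRightDescent at this
          omega
        rw [List.length_append, List.length_singleton]
        omega
    · push_neg at hd
      exact ⟨w, [], by simp, by simp, by simp, hd.1, hd.2⟩

/-- A positive root sent to a negative root by a simple reflection is the corresponding
simple root. -/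
theorem eq_alpha_of_simple_neg {γ : V} {i : B} (h1 : γ ∈ G.PhiPos)
    (h2 : G.ρ (cs.simple i) γ ∈ G.PhiNeg) : γ = G.α i := by
  rw [G.mem_phiPos_iff] at h1
  rw [G.mem_phiNeg_iff] at h2
  have hcoord : ∀ t, t ≠ i → G.bas.repr γ t = 0 := by
    intro t hti
    have e1 : G.bas.repr (G.ρ (cs.simple i) γ) t = G.bas.repr γ t := by
      rw [G.rho_simple_apply, map_sub, map_smul, G.repr_alpha]
      have : (Finsupp.single i (1:ℝ)) t = 0 := by
        rw [Finsupp.single_apply, if_neg (fun h => hti h.symm)]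
      rw [Finsupp.sub_apply, Finsupp.smul_apply, this, smul_zero, sub_zero]
    have h2t := h2.2 t
    rw [e1] at h2t
    exact le_antisymm h2t (h1.2 t)
  have hγ : γ = (G.bas.repr γ i) • G.α i := by
    have hrepr : G.bas.repr γ = Finsupp.single i (G.bas.repr γ i) := by
      ext t
      rcases eq_or_ne t i with rfl | ht
      · simp
      · rw [hcoord t ht, Finsupp.single_apply, if_neg (fun h => ht h.symm)]
    calc γ = G.bas.repr.symm (G.bas.repr γ) := by simp
      _ = G.bas.repr.symm (Finsupp.single i (G.bas.repr γ i)) := by rw [← hrepr]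
      _ = (G.bas.repr γ i) • G.α i := by
          rw [Module.Basis.repr_symm_apply, Finsupp.linearCombination_single, G.bas_apply]
  have hn := G.form_self_eq_one h1.1
  rw [hγ] at hn ⊢
  simp only [map_smul, LinearMap.smul_apply, smul_eq_mul, G.form_alpha_self] at hn
  have hc : G.bas.repr γ i = 1 := by nlinarith [h1.2 i]
  rw [hc, one_smul]

/-- **Fundamental theorem**: if `i` is not a right descent of `w`, then `w · α_i` is positive. -/
theorem phiPos_of_not_descent' : ∀ n (w : W), cs.length w = n → ∀ i : B,
    ¬ cs.IsRightDescent w i → G.ρ w (G.α i) ∈ G.PhiPos := by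
  intro n
  induction n using Nat.strong_induction_on with
  | _ n ih =>
    intro w hw i hni
    rcases eq_or_ne w 1 with rfl | hw1
    · rw [G.rho_one_apply]; exact G.alpha_mem_phiPos i
    · obtain ⟨j, hdj⟩ := cs.exists_rightDescent_of_ne_one hw1
      have hij : i ≠ j := by rintro rfl; exact hni hdj
      obtain ⟨u, ω, hmem, hprod, hlen, hui, huj⟩ := strip (cs := cs) i j (cs.length w) w rfl
      have hωpos : ω ≠ [] := by
        rintro rfl
        rw [CoxeterSystem.wordProd_nil, mul_one] at hprod
        exact huj (hprod ▸ hdj)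
      have hulen : cs.length u < n := by
        have : 0 < ω.length := List.length_pos_iff.mpr hωpos
        omega
      have hu_i := ih _ hulen u rfl i hui
      have hu_j := ih _ hulen u rfl j huj
      have hC : ∀ ω' : List B, (∀ t ∈ ω', t = i ∨ t = j) →
          cs.wordProd ω' = cs.wordProd ω * cs.simple i → ω.length < ω'.length := by
        intro ω' hmem' heq
        by_contra hle
        push_neg at hle
        have h1 : w * cs.simple i = u * cs.wordProd ω' := by
          rw [heq, hprod, mul_assoc]
        have h2 : cs.length (w * cs.simple i) ≤ cs.length u + ω'.length := by
          rw [h1]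
          calc cs.length (u * cs.wordProd ω') ≤ cs.length u + cs.length (cs.wordProd ω') :=
              cs.length_mul_le _ _
            _ ≤ cs.length u + ω'.length := by
              have := cs.length_wordProd_le ω'
              omega
        have h3 : cs.length w < cs.length (w * cs.simple i) := by
          have hne := cs.length_mul_simple_ne w i
          have : ¬ cs.length (w * cs.simple i) < cs.length w := hni
          omega
        omega
      obtain ⟨a, b, ha, hb, hab⟩ := G.dihedral_nonneg hij ω hmem hC
      have hval : G.ρ w (G.α i) = a • G.ρ u (G.α i) + b • G.ρ u (G.α j) := by
        rw [hprod, G.rho_mul_apply, hab, map_add, map_smul, map_smul]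
      rw [G.mem_phiPos_iff]
      refine ⟨G.rho_mem_Phi w ⟨1, i, by simp⟩, ?_⟩
      intro t
      rw [hval, map_add, map_smul, map_smul]
      have hpi := (G.mem_phiPos_iff.mp hu_i).2 t
      have hpj := (G.mem_phiPos_iff.mp hu_j).2 t
      simp only [Finsupp.coe_add, Finsupp.coe_smul, Pi.add_apply, Pi.smul_apply, smul_eq_mul]
      nlinarith

theorem phiPos_of_not_descent {w : W} {i : B} (h : ¬ cs.IsRightDescent w i) :
    G.ρ w (G.α i) ∈ G.PhiPos :=
  G.phiPos_of_not_descent' (cs.length w) w rfl i h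

theorem phiNeg_of_descent {w : W} {i : B} (h : cs.IsRightDescent w i) :
    G.ρ w (G.α i) ∈ G.PhiNeg := by
  have h' : ¬ cs.IsRightDescent (w * cs.simple i) i :=
    (cs.isRightDescent_iff_not_isRightDescent_mul).mp h
  have hpos := G.phiPos_of_not_descent h'
  have : G.ρ w (G.α i) = - G.ρ (w * cs.simple i) (G.α i) := by
    rw [G.rho_mul_apply, G.rho_simple_alpha, map_neg, neg_neg]
  rw [this]
  exact G.neg_mem_phiNeg hpos

theorem descent_iff_neg {w : W} {i : B} :
    cs.IsRightDescent w i ↔ G.ρ w (G.α i) ∈ G.PhiNeg := by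
  constructor
  · exact G.phiNeg_of_descent
  · intro h
    by_contra hnd
    exact G.not_mem_phiPos_and_phiNeg (G.phiPos_of_not_descent hnd) h

theorem not_descent_iff_pos {w : W} {i : B} :
    ¬ cs.IsRightDescent w i ↔ G.ρ w (G.α i) ∈ G.PhiPos := by
  constructor
  · exact G.phiPos_of_not_descent
  · intro h hd
    exact G.not_mem_phiPos_and_phiNeg h (G.phiNeg_of_descent hd)

/-- **Dichotomy**: every root is positive or negative. -/
theorem phiPos_or_phiNeg {γ : V} (hγ : γ ∈ G.Phi) : γ ∈ G.PhiPos ∨ γ ∈ G.PhiNeg := by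
  obtain ⟨w, i, rfl⟩ := hγ
  by_cases hd : cs.IsRightDescent w i
  · right; exact G.phiNeg_of_descent hd
  · left; exact G.phiPos_of_not_descent hd

theorem simple_pos_of_ne {γ : V} {i : B} (h1 : γ ∈ G.PhiPos) (hne : γ ≠ G.α i) :
    G.ρ (cs.simple i) γ ∈ G.PhiPos := by
  have hΦ : G.ρ (cs.simple i) γ ∈ G.Phi := G.rho_mem_Phi _ (G.mem_Phi_of_mem_phiPos h1)
  rcases G.phiPos_or_phiNeg hΦ with h | h
  · exact h
  · exact absurd (G.eq_alpha_of_simple_neg h1 h) hne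

/-! ### Inversion sets -/

/-- The inversion set `N(w)`. -/
def Nset (w : W) : Set V := {γ | γ ∈ G.PhiPos ∧ G.ρ w γ ∈ G.PhiNeg}

theorem alpha_mem_Nset_iff {w : W} {i : B} :
    G.α i ∈ G.Nset w ↔ cs.IsRightDescent w i := by
  rw [Nset, Set.mem_setOf_eq, ← G.descent_iff_neg]
  exact ⟨fun h => h.2, fun h => ⟨G.alpha_mem_phiPos i, h⟩⟩

theorem Nset_nonempty_of_ne_one {w : W} (hw : w ≠ 1) : ∃ γ, γ ∈ G.Nset w := by
  obtain ⟨i, hi⟩ := cs.exists_rightDescent_of_ne_one hw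
  exact ⟨G.α i, G.alpha_mem_Nset_iff.mpr hi⟩

theorem Nset_one : G.Nset (1 : W) = ∅ := by
  ext γ
  simp only [Nset, Set.mem_setOf_eq, Set.mem_empty_iff_false, iff_false]
  rintro ⟨h1, h2⟩
  rw [G.rho_one_apply] at h2
  exact G.not_mem_phiPos_and_phiNeg h1 h2

theorem Nset_mul_simple {w : W} {i : B} (hd : cs.IsRightDescent w i) :
    G.Nset (w * cs.simple i) = (fun γ => G.ρ (cs.simple i) γ) '' (G.Nset w \ {G.α i}) := by
  ext γ
  constructor
  · rintro ⟨h1, h2⟩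
    rw [G.rho_mul_apply] at h2
    have hne : γ ≠ G.α i := by
      rintro rfl
      rw [G.rho_simple_alpha, map_neg] at h2
      have := G.phiNeg_of_descent hd
      have hpos : -(- G.ρ w (G.α i)) ∈ G.PhiNeg := by rwa [neg_neg]
      exact G.not_mem_phiPos_and_phiNeg (G.neg_mem_phiPos h2) hpos
    have hδpos : G.ρ (cs.simple i) γ ∈ G.PhiPos := G.simple_pos_of_ne h1 hne
    have hδne : G.ρ (cs.simple i) γ ≠ G.α i := by
      intro h
      have : γ = G.ρ (cs.simple i) (G.α i) := by
        rw [← h, ← G.rho_mul_apply, CoxeterSystem.simple_mul_simple_self, G.rho_one_apply]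
      rw [G.rho_simple_alpha] at this
      subst this
      exact G.not_mem_phiPos_and_phiNeg h1 (G.neg_mem_phiNeg (G.alpha_mem_phiPos i))
    refine ⟨G.ρ (cs.simple i) γ, ⟨⟨hδpos, h2⟩, hδne⟩, ?_⟩
    show G.ρ (cs.simple i) (G.ρ (cs.simple i) γ) = γ
    rw [← G.rho_mul_apply, CoxeterSystem.simple_mul_simple_self, G.rho_one_apply]
  · rintro ⟨δ, ⟨⟨hδpos, hδneg⟩, hδne⟩, rfl⟩
    have hδne' : δ ≠ G.α i := hδne
    refine ⟨G.simple_pos_of_ne hδpos hδne', ?_⟩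
    show G.ρ (w * cs.simple i) (G.ρ (cs.simple i) δ) ∈ G.PhiNeg
    rw [G.rho_mul_apply, ← G.rho_mul_apply (cs.simple i), CoxeterSystem.simple_mul_simple_self,
      G.rho_one_apply]
    exact hδneg

theorem Nset_finite (w : W) : (G.Nset w).Finite := by
  obtain ⟨ω, rfl⟩ := cs.wordProd_surjective w
  induction ω with
  | nil =>
    rw [CoxeterSystem.wordProd_nil, G.Nset_one]
    exact Set.finite_empty
  | cons i ω ih =>
    rw [CoxeterSystem.wordProd_cons]
    apply Set.Finite.subset (Set.Finite.insert (G.ρ (cs.wordProd ω)⁻¹ (G.α i)) ih)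
    rintro γ ⟨h1, h2⟩
    rw [G.rho_mul_apply] at h2
    rcases G.phiPos_or_phiNeg (G.rho_mem_Phi (cs.wordProd ω) (G.mem_Phi_of_mem_phiPos h1))
      with hδ | hδ
    · have := G.eq_alpha_of_simple_neg hδ h2
      left
      rw [← this, G.rho_inv_apply']
    · right; exact ⟨h1, hδ⟩

theorem Nset_inj : ∀ n (u : W), cs.length u = n → ∀ v : W, G.Nset u = G.Nset v → u = v := by
  intro n
  induction n using Nat.strong_induction_on with
  | _ n ih =>
    intro u hu v huv
    rcases eq_or_ne u 1 with rfl | hu1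
    · by_contra hv1
      obtain ⟨γ, hγ⟩ := G.Nset_nonempty_of_ne_one (Ne.symm hv1)
      rw [← huv, G.Nset_one] at hγ
      exact hγ
    · obtain ⟨i, hdi⟩ := cs.exists_rightDescent_of_ne_one hu1
      have hdvi : cs.IsRightDescent v i := by
        rw [← G.alpha_mem_Nset_iff (cs := cs), ← huv, G.alpha_mem_Nset_iff]
        exact hdi
      have heq : G.Nset (u * cs.simple i) = G.Nset (v * cs.simple i) := by
        rw [G.Nset_mul_simple hdi, G.Nset_mul_simple hdvi, huv]
      have hlen : cs.length (u * cs.simple i) < n := by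
        have := hdi
        unfold CoxeterSystem.IsRightDescent at this
        omega
      have := ih _ hlen (u * cs.simple i) rfl (v * cs.simple i) heq
      exact mul_right_cancel this

/-- The divisibility criterion: if `N(v) ⊆ N(w)` then `v` right-divides `w`. -/
theorem length_additive_of_Nset_subset :
    ∀ n (v : W), cs.length v = n → ∀ w : W, G.Nset v ⊆ G.Nset w →
      cs.length w = cs.length (w * v⁻¹) + cs.length v := by
  intro n
  induction n using Nat.strong_induction_on with
  | _ n ih =>
    intro v hv w hsub
    rcases eq_or_ne v 1 with rfl | hv1
    · simp
    · obtain ⟨i, hdi⟩ := cs.exists_rightDescent_of_ne_one hv1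
      have hdwi : cs.IsRightDescent w i :=
        G.alpha_mem_Nset_iff.mp (hsub (G.alpha_mem_Nset_iff.mpr hdi))
      have hsub' : G.Nset (v * cs.simple i) ⊆ G.Nset (w * cs.simple i) := by
        rw [G.Nset_mul_simple hdi, G.Nset_mul_simple hdwi]
        apply Set.image_mono
        exact Set.diff_subset_diff_left hsub
      have hlenv : cs.length (v * cs.simple i) < n := by
        have := hdi
        unfold CoxeterSystem.IsRightDescent at this
        omega
      have hrec := ih _ hlenv (v * cs.simple i) rfl (w * cs.simple i) hsub'
      have hsimp : w * cs.simple i * (v * cs.simple i)⁻¹ = w * v⁻¹ := by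
        rw [mul_inv_rev, cs.inv_simple, ← mul_assoc, mul_assoc w _ _,
          CoxeterSystem.simple_mul_simple_self, mul_one]
      rw [hsimp] at hrec
      have h1 : cs.length (v * cs.simple i) + 1 = cs.length v := by
        have h := hdi
        unfold CoxeterSystem.IsRightDescent at h
        have := cs.length_mul_simple v i
        omega
      have h2 : cs.length (w * cs.simple i) + 1 = cs.length w := by
        have h := hdwi
        unfold CoxeterSystem.IsRightDescent at h
        have := cs.length_mul_simple w i
        omega
      omega

/-! ### Supports, parabolic subgroups, and spans -/

theorem sum_repr (γ : V) :
    γ = ∑ x ∈ (G.bas.repr γ).support, (G.bas.repr γ x) • G.α x := by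
  conv_lhs => rw [← G.bas.linearCombination_repr γ]
  rw [Finsupp.linearCombination_apply, Finsupp.sum]
  exact Finset.sum_congr rfl (fun x _ => by rw [G.bas_apply])

theorem repr_combo (s : Finset B) (f : B → ℝ) (t : B) :
    G.bas.repr (∑ x ∈ s, f x • G.α x) t = if t ∈ s then f t else 0 := by
  rw [map_sum, Finsupp.finset_sum_apply]
  have h1 : ∀ x ∈ s, G.bas.repr (f x • G.α x) t = if x = t then f x else 0 := by
    intro x _
    rw [map_smul, G.repr_alpha, Finsupp.smul_apply, Finsupp.single_apply, smul_eq_mul,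
      mul_ite, mul_one, mul_zero]
  rw [Finset.sum_congr rfl h1, Finset.sum_ite_eq' s t f]

theorem rho_par_diff_mem_span {I : Set B} {u : W} (hu : u ∈ par cs I) :
    ∀ v : V, G.ρ u v - v ∈ Submodule.span ℝ (G.PiI I) := by
  induction hu using Subgroup.closure_induction with
  | mem x hx =>
    obtain ⟨i, hi, rfl⟩ := hx
    intro v
    rw [G.rho_simple_apply]
    have : v - (2 * G.form (G.α i) v) • G.α i - v = (-(2 * G.form (G.α i) v)) • G.α i := by
      module
    rw [this]
    exact Submodule.smul_mem _ _ (Submodule.subset_span ⟨i, hi, rfl⟩)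
  | one => intro v; simp
  | mul x y hx hy ihx ihy =>
    intro v
    have : G.ρ (x * y) v - v = (G.ρ x (G.ρ y v) - G.ρ y v) + (G.ρ y v - v) := by
      rw [G.rho_mul_apply]; abel
    rw [this]
    exact Submodule.add_mem _ (ihx _) (ihy _)
  | inv x hx ih =>
    intro v
    have : G.ρ x⁻¹ v - v = -(G.ρ x (G.ρ x⁻¹ v) - G.ρ x⁻¹ v) := by
      rw [G.rho_inv_apply]; abel
    rw [this]
    exact Submodule.neg_mem _ (ih _)

theorem repr_eq_zero_of_mem_span {I : Set B} {v : V}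
    (hv : v ∈ Submodule.span ℝ (G.PiI I)) {t : B} (ht : t ∉ I) : G.bas.repr v t = 0 := by
  induction hv using Submodule.span_induction with
  | mem x hx =>
    obtain ⟨i, hi, rfl⟩ := hx
    rw [G.repr_alpha, Finsupp.single_apply, if_neg (show ¬ i = t from fun h => ht (h ▸ hi))]
  | zero => simp
  | add x y hx hy ihx ihy => rw [map_add]; simp [ihx, ihy]
  | smul c x hx ih => rw [map_smul]; simp [ih]

theorem mem_span_of_supp {I : Set B} {v : V}
    (h : ∀ t, G.bas.repr v t ≠ 0 → t ∈ I) : v ∈ Submodule.span ℝ (G.PiI I) := by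
  rw [G.sum_repr v]
  apply Submodule.sum_mem
  intro x hx
  apply Submodule.smul_mem
  exact Submodule.subset_span ⟨x, h x (Finsupp.mem_support_iff.mp hx), rfl⟩

theorem Nset_supp_subset {I : Set B} {u : W} (hu : u ∈ par cs I) {γ : V}
    (hγ : γ ∈ G.Nset u) : ∀ t, G.bas.repr γ t ≠ 0 → t ∈ I := by
  intro t ht
  by_contra htI
  obtain ⟨hpos, hneg⟩ := hγ
  have h1 : 0 < G.bas.repr γ t :=
    lt_of_le_of_ne ((G.mem_phiPos_iff.mp hpos).2 t) (Ne.symm ht)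
  have h2 : G.bas.repr (G.ρ u γ) t = G.bas.repr γ t := by
    have hdiff := G.rho_par_diff_mem_span hu γ
    have := G.repr_eq_zero_of_mem_span hdiff htI
    rw [map_sub, Finsupp.sub_apply] at this
    linarith
  have h3 := (G.mem_phiNeg_iff.mp hneg).2 t
  rw [h2] at h3
  linarith

/-- If the positive roots supported in `I` form a finite set, then `W_I` is finite. -/
theorem par_finite_of_pos_finite {I : Set B}
    (h : {γ | γ ∈ G.PhiPos ∧ ∀ t, G.bas.repr γ t ≠ 0 → t ∈ I}.Finite) :
    (par cs I : Set W).Finite := by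
  have himg : ((fun u => G.Nset u) '' (par cs I : Set W)).Finite := by
    apply Set.Finite.subset h.finite_subsets
    rintro S ⟨u, hu, rfl⟩
    intro γ hγ
    exact ⟨hγ.1, G.Nset_supp_subset hu hγ⟩
  apply Set.Finite.of_finite_image himg
  intro u _ v _ huv
  exact G.Nset_inj (cs.length u) u rfl v huv

/-! ### Extending roots along adjacent vertices -/

theorem extension {γ : V} {t : B} (hγ : γ ∈ G.PhiPos) (ht : G.bas.repr γ t = 0)
    (hadj : ∃ u, G.bas.repr γ u ≠ 0 ∧ adj M t u) :
    G.ρ (cs.simple t) γ ∈ G.PhiPos ∧ G.bas.repr (G.ρ (cs.simple t) γ) t ≠ 0 ∧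
      ∀ x, x ≠ t → G.bas.repr (G.ρ (cs.simple t) γ) x = G.bas.repr γ x := by
  obtain ⟨u, hu, hadjtu⟩ := hadj
  have hposc := (G.mem_phiPos_iff.mp hγ).2
  have htu : t ≠ u := fun h => hu (h ▸ ht)
  -- compute the form
  have hform : G.form (G.α t) γ < 0 := by
    have hexp : G.form (G.α t) γ =
        ∑ x ∈ (G.bas.repr γ).support, (G.bas.repr γ x) * G.form (G.α t) (G.α x) := by
      conv_lhs => rw [G.sum_repr γ]
      rw [map_sum]
      exact Finset.sum_congr rfl (fun x _ => by rw [map_smul, smul_eq_mul])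
    have husupp : u ∈ (G.bas.repr γ).support := Finsupp.mem_support_iff.mpr hu
    rw [hexp, ← Finset.add_sum_erase _ _ husupp]
    have h1 : (G.bas.repr γ u) * G.form (G.α t) (G.α u) < 0 := by
      have hc : 0 < G.bas.repr γ u := lt_of_le_of_ne (hposc u) (Ne.symm hu)
      have hf : G.form (G.α t) (G.α u) < 0 := G.form_alpha_neg_of_adj hadjtu.1 hadjtu.2
      exact mul_neg_of_pos_of_neg hc hf
    have h2 : ∑ x ∈ ((G.bas.repr γ).support.erase u), (G.bas.repr γ x) *
        G.form (G.α t) (G.α x) ≤ 0 := by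
      apply Finset.sum_nonpos
      intro x hx
      have hxmem := Finset.mem_of_mem_erase hx
      have hxt : t ≠ x := by
        rintro rfl
        exact (Finsupp.mem_support_iff.mp hxmem) ht
      exact mul_nonpos_of_nonneg_of_nonpos (hposc x) (G.form_alpha_nonpos hxt)
    linarith
  have hc : 0 < -(2 * G.form (G.α t) γ) := by linarith
  have hval : G.ρ (cs.simple t) γ = γ + (-(2 * G.form (G.α t) γ)) • G.α t := by
    rw [G.rho_simple_apply]; module
  have hreprt : ∀ x, G.bas.repr (G.ρ (cs.simple t) γ) x =
      G.bas.repr γ x + (if t = x then -(2 * G.form (G.α t) γ) else 0) := by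
    intro x
    rw [hval, map_add, map_smul, G.repr_alpha, Finsupp.add_apply, Finsupp.smul_apply,
      Finsupp.single_apply, smul_eq_mul, mul_ite, mul_one, mul_zero]
  refine ⟨?_, ?_, ?_⟩
  · rw [G.mem_phiPos_iff]
    constructor
    · exact G.rho_mem_Phi _ (G.mem_Phi_of_mem_phiPos hγ)
    · intro x
      rw [hreprt x]
      rcases eq_or_ne t x with rfl | hx
      · rw [if_pos rfl]; linarith [hposc t]
      · rw [if_neg hx]; simpa using hposc x
  · rw [hreprt t, if_pos rfl, ht]
    linarith
  · intro x hx
    rw [hreprt x, if_neg (Ne.symm hx), add_zero]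

/-- From a connecting walk one obtains a positive root whose support contains both
endpoints. -/
theorem walk_root {S : Set B} : ∀ {a k : B}, connIn M S a k → a ∈ S →
    ∃ γ, γ ∈ G.PhiPos ∧ G.bas.repr γ a ≠ 0 ∧ G.bas.repr γ k ≠ 0 ∧
      ∀ x, G.bas.repr γ x ≠ 0 → x ∈ S := by
  intro a k hconn
  induction hconn using Relation.ReflTransGen.head_induction_on with
  | refl =>
    intro ha
    have hone : G.bas.repr (G.α k) k ≠ 0 := by
      rw [G.repr_alpha, Finsupp.single_apply, if_pos rfl]; norm_num
    refine ⟨G.α k, G.alpha_mem_phiPos k, hone, hone, ?_⟩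
    intro x hx
    rw [G.repr_alpha, Finsupp.single_apply] at hx
    rcases eq_or_ne k x with rfl | h
    · exact ha
    · rw [if_neg h] at hx; exact absurd rfl hx
  | @head a' b hab hbk ih =>
    intro ha'
    obtain ⟨haS, hbS, hadjab⟩ := hab
    obtain ⟨γ, hγpos, hb, hk, hsupp⟩ := ih hbS
    by_cases hrγa : G.bas.repr γ a' ≠ 0
    · exact ⟨γ, hγpos, hrγa, hk, hsupp⟩
    · push_neg at hrγa
      obtain ⟨h1, h2, h3⟩ := G.extension hγpos hrγa ⟨_, hb, hadjab⟩
      refine ⟨G.ρ (cs.simple a') γ, h1, h2, ?_, ?_⟩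
      · have hka : k ≠ a' := by rintro rfl; exact hk hrγa
        rw [h3 k hka]; exact hk
      · intro x hx
        rcases eq_or_ne x a' with rfl | hxa
        · exact haS
        · rw [h3 x hxa] at hx; exact hsupp x hx

/-! ### The longest element of a finite standard parabolic -/

theorem w0_spec {I : Set B} (h : finType cs I) :
    w0 cs I ∈ par cs I ∧ ∀ u ∈ par cs I, cs.length u ≤ cs.length (w0 cs I) := by
  have hex : ∃ x ∈ par cs I, ∀ u ∈ par cs I, cs.length u ≤ cs.length x := by
    obtain ⟨x, hx, hmax⟩ := Set.Finite.exists_maximalFor cs.length _ h ⟨1, (par cs I).one_mem⟩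
    refine ⟨x, hx, fun u hu => ?_⟩
    by_contra hlt
    push_neg at hlt
    have := hmax hu (le_of_lt hlt)
    omega
  rw [w0, dif_pos hex]
  exact ⟨hex.choose_spec.1, hex.choose_spec.2⟩

theorem w0_mem {I : Set B} (h : finType cs I) : w0 cs I ∈ par cs I := (w0_spec (cs := cs) h).1

theorem w0_simple_neg {I : Set B} (h : finType cs I) {i : B} (hi : i ∈ I) :
    G.ρ (w0 cs I) (G.α i) ∈ G.PhiNeg := by
  obtain ⟨hmem, hmax⟩ := w0_spec (cs := cs) h
  rw [← G.descent_iff_neg]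
  by_contra hnd
  have hgt : cs.length (w0 cs I) < cs.length (w0 cs I * cs.simple i) := by
    have := cs.length_mul_simple_ne (w0 cs I) i
    unfold CoxeterSystem.IsRightDescent at hnd
    omega
  have hmem' : w0 cs I * cs.simple i ∈ par cs I :=
    Subgroup.mul_mem _ hmem (Subgroup.subset_closure ⟨i, hi, rfl⟩)
  have := hmax _ hmem'
  omega

theorem w0_neg_of_supp {I : Set B} (h : finType cs I) {γ : V} (hγ : γ ∈ G.PhiPos)
    (hs : ∀ x, G.bas.repr γ x ≠ 0 → x ∈ I) : G.ρ (w0 cs I) γ ∈ G.PhiNeg := by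
  rw [G.mem_phiNeg_iff]
  constructor
  · exact G.neg_mem_Phi (G.rho_mem_Phi _ (G.mem_Phi_of_mem_phiPos hγ))
  · intro t
    have hval : G.ρ (w0 cs I) γ =
        ∑ x ∈ (G.bas.repr γ).support, (G.bas.repr γ x) • G.ρ (w0 cs I) (G.α x) := by
      conv_lhs => rw [G.sum_repr γ]
      rw [map_sum]
      exact Finset.sum_congr rfl (fun x _ => by rw [map_smul])
    rw [hval, map_sum, Finsupp.finset_sum_apply]
    apply Finset.sum_nonpos
    intro x hx
    rw [map_smul, Finsupp.smul_apply, smul_eq_mul]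
    have hxI := hs x (Finsupp.mem_support_iff.mp hx)
    have hneg := G.w0_simple_neg h hxI
    have hcoord := (G.mem_phiNeg_iff.mp hneg).2 t
    have hcx : 0 ≤ G.bas.repr γ x := (G.mem_phiPos_iff.mp hγ).2 x
    exact mul_nonpos_of_nonneg_of_nonpos hcx hcoord

theorem finType_mono {I I' : Set B} (hsub : I' ⊆ I) (h : finType cs I) : finType cs I' := by
  apply Set.Finite.subset h
  have : par cs I' ≤ par cs I := Subgroup.closure_mono (Set.image_mono hsub)
  exact this

/-! ### The key negativity lemma -/

theorem rho_inv_span {w : W} {J : Set B} {g : B → B} {P : Finset B}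
    (hg : ∀ x ∈ P, G.ρ w (G.α x) = G.α (g x)) (hPJ : ∀ x ∈ P, x ∈ J) {D : V}
    (hD : D ∈ Submodule.span ℝ (G.PiI ↑(P.image g))) :
    G.ρ w⁻¹ D ∈ Submodule.span ℝ (G.PiI J) := by
  induction hD using Submodule.span_induction with
  | mem v hv =>
    obtain ⟨t, ht, rfl⟩ := hv
    obtain ⟨x, hxP, rfl⟩ := Finset.mem_image.mp (Finset.mem_coe.mp ht)
    have : G.ρ w⁻¹ (G.α (g x)) = G.α x := by
      rw [← hg x hxP, G.rho_inv_apply']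
    rw [this]
    exact Submodule.subset_span ⟨x, hPJ x hxP, rfl⟩
  | zero => rw [map_zero]; exact Submodule.zero_mem _
  | add u v hu hv ihu ihv => rw [map_add]; exact Submodule.add_mem _ ihu ihv
  | smul r v hv ih => rw [map_smul]; exact Submodule.smul_mem _ _ ih

theorem key_neg {w : W} {J K : Set B} (hJ : ∀ j ∈ J, ∃ i, G.ρ w (G.α j) = G.α i)
    (hK : ∀ k ∈ K, G.ρ w (G.α k) ∈ G.PhiNeg) (hJK : ∀ j, ¬(j ∈ J ∧ j ∈ K))
    {γ : V} (hγ : γ ∈ G.PhiPos) (hsupp : ∀ x, G.bas.repr γ x ≠ 0 → x ∈ J ∪ K)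
    (hksupp : ∃ k, k ∈ K ∧ G.bas.repr γ k ≠ 0) : G.ρ w γ ∈ G.PhiNeg := by
  classical
  rcases G.phiPos_or_phiNeg (G.rho_mem_Phi w (G.mem_Phi_of_mem_phiPos hγ)) with hpos | hneg
  swap
  · exact hneg
  exfalso
  set c := G.bas.repr γ with hcdef
  set P : Finset B := c.support.filter (· ∈ J) with hP
  set Q : Finset B := c.support.filter (· ∈ K) with hQ
  choose! g hg using hJ
  have hsplit : γ = (∑ x ∈ P, c x • G.α x) + (∑ x ∈ Q, c x • G.α x) := by
    conv_lhs => rw [G.sum_repr γ]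
    rw [← Finset.sum_filter_add_sum_filter_not c.support (· ∈ J)]
    congr 1
    apply Finset.sum_congr ?_ (fun _ _ => rfl)
    rw [hQ]
    ext x
    simp only [Finset.mem_filter, Finsupp.mem_support_iff]
    constructor
    · rintro ⟨hx, hxJ⟩
      exact ⟨hx, (hsupp x hx).resolve_left hxJ⟩
    · rintro ⟨hx, hxK⟩
      exact ⟨hx, fun hxJ => hJK x ⟨hxJ, hxK⟩⟩
  have hA : (∑ x ∈ P, c x • G.α (g x)) = G.ρ w (∑ x ∈ P, c x • G.α x) := by
    rw [map_sum]
    apply Finset.sum_congr rfl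
    intro x hx
    rw [map_smul, hg x (Finset.mem_filter.mp hx).2]
  set D : V := (∑ x ∈ P, c x • G.α (g x)) - G.ρ w γ with hD
  have h5 : (∑ x ∈ P, c x • G.α x) - γ = -(∑ x ∈ Q, c x • G.α x) := by
    conv_lhs => rw [hsplit]
    abel
  have hD2 : D = ∑ x ∈ Q, c x • (-(G.ρ w (G.α x))) := by
    rw [hD, hA, ← map_sub, h5, map_neg, map_sum]
    simp only [map_smul, smul_neg]
    rw [← Finset.sum_neg_distrib]
  have hDnonneg : ∀ t, 0 ≤ G.bas.repr D t := by
    intro t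
    rw [hD2, map_sum, Finsupp.finset_sum_apply]
    apply Finset.sum_nonneg
    intro x hx
    rw [map_smul, Finsupp.smul_apply, smul_eq_mul]
    apply mul_nonneg ((G.mem_phiPos_iff.mp hγ).2 x)
    have hxK := (Finset.mem_filter.mp hx).2
    have := (G.mem_phiNeg_iff.mp (hK x hxK)).2 t
    rw [map_neg, Finsupp.neg_apply]
    linarith
  have hD0 : ∀ t, t ∉ P.image g → G.bas.repr D t = 0 := by
    intro t htT
    have h1 : G.bas.repr (∑ x ∈ P, c x • G.α (g x)) t = 0 := by
      rw [map_sum, Finsupp.finset_sum_apply]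
      apply Finset.sum_eq_zero
      intro x hx
      rw [map_smul, G.repr_alpha, Finsupp.smul_apply, Finsupp.single_apply,
        if_neg (show ¬ g x = t from fun h => htT (h ▸ Finset.mem_image_of_mem g hx)), smul_zero]
    have h2 : G.bas.repr D t ≤ 0 := by
      rw [hD, map_sub, Finsupp.sub_apply, h1, zero_sub]
      have := (G.mem_phiPos_iff.mp hpos).2 t
      linarith
    exact le_antisymm h2 (hDnonneg t)
  have hDspan : D ∈ Submodule.span ℝ (G.PiI ↑(P.image g)) := by
    apply G.mem_span_of_supp
    intro t ht
    by_contra htT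
    exact ht (hD0 t htT)
  have hpull : G.ρ w⁻¹ D ∈ Submodule.span ℝ (G.PiI J) :=
    G.rho_inv_span (fun x hx => hg x (Finset.mem_filter.mp hx).2)
      (fun x hx => (Finset.mem_filter.mp hx).2) hDspan
  have h8 : G.ρ w⁻¹ D = -(∑ x ∈ Q, c x • G.α x) := by
    rw [hD, hA, ← map_sub, G.rho_inv_apply', h5]
  obtain ⟨k, hkK, hck⟩ := hksupp
  have hkJ : k ∉ J := fun h => hJK k ⟨h, hkK⟩
  have h9 := G.repr_eq_zero_of_mem_span (h8 ▸ hpull) hkJ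
  rw [map_neg, Finsupp.neg_apply] at h9
  have h10 : G.bas.repr (∑ x ∈ Q, c x • G.α x) k = c k := by
    rw [G.repr_combo, if_pos (Finset.mem_filter.mpr ⟨Finsupp.mem_support_iff.mpr hck, hkK⟩)]
  rw [h10] at h9
  exact hck (by linarith)

/-- Escaping a finite set along a connecting walk. -/
theorem leave_set {S : Set B} (A : Finset B) :
    ∀ {a k : B}, connIn M S a k → a ∈ A → k ∉ A →
      ∃ x ∈ A, ∃ t, t ∉ A ∧ t ∈ S ∧ adj M x t ∧ connIn M S t k := by
  intro a k h
  induction h using Relation.ReflTransGen.head_induction_on with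
  | refl => intro ha hk; exact absurd ha hk
  | @head a' b hab hbk ih =>
    intro ha hk
    by_cases hbA : b ∈ A
    · exact ih hbA hk
    · exact ⟨a', ha, b, hbA, hab.2.1, hab.2.2, hbk⟩

theorem adj_symm {x t : B} (h : adj M x t) : adj M t x :=
  ⟨h.1.symm, by rw [M.symmetric]; exact h.2⟩

end GeomRep

end Statement4Aux
/-- Lemma `rightdivisor`. Let `w ∈ W` and `J, K ⊆ S`, and suppose that
`w·Π_J ⊆ Π` and `w·Π_K ⊆ Φ⁻`. Then `J ∩ K = ∅`, the set `J_{∼K}` is of finite type, and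
`ν = w₀(J_{∼K})·w₀(J_{∼K}∖K)` is a right divisor of `w`, i.e. `ℓ(w) = ℓ(wν⁻¹) + ℓ(ν)`. -/
theorem statement_4 (w : W) (J K : Set B)
    (hJ : (fun v => G.ρ w v) '' G.PiI J ⊆ G.Pi0)
    (hK : (fun v => G.ρ w v) '' G.PiI K ⊆ G.PhiNeg) :
    J ∩ K = ∅ ∧ finType cs (compUnion M J K) ∧
      cs.length w =
        cs.length (w * (w0 cs (compUnion M J K) * w0 cs (compUnion M J K \ K))⁻¹) +
          cs.length (w0 cs (compUnion M J K) * w0 cs (compUnion M J K \ K)) := by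
  classical
  have hJ' : ∀ j ∈ J, ∃ i, G.ρ w (G.α j) = G.α i := by
    intro j hj
    obtain ⟨i, hi⟩ := hJ ⟨G.α j, ⟨j, hj, rfl⟩, rfl⟩
    exact ⟨i, hi.symm⟩
  have hK' : ∀ k ∈ K, G.ρ w (G.α k) ∈ G.PhiNeg := fun k hk => hK ⟨G.α k, ⟨k, hk, rfl⟩, rfl⟩
  have hJK : ∀ j, ¬(j ∈ J ∧ j ∈ K) := by
    rintro j ⟨hjJ, hjK⟩
    obtain ⟨i, hi⟩ := hJ' j hjJ
    have hneg := hK' j hjK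
    rw [hi] at hneg
    exact G.not_mem_phiPos_and_phiNeg (G.alpha_mem_phiPos i) hneg
  have hJKempty : J ∩ K = ∅ := by
    rw [Set.eq_empty_iff_forall_notMem]
    intro j hj
    exact hJK j ⟨hj.1, hj.2⟩
  set L := compUnion M J K with hLdef
  have hLJK : L ⊆ J ∪ K := fun a ha => ha.1
  -- every element of `L` lies in the support of some element of `N(w)`
  have hLsub : ∀ a ∈ L, ∃ γ ∈ G.Nset w, G.bas.repr γ a ≠ 0 := by
    intro a ha
    obtain ⟨haJK, k, hkK, hconn⟩ := ha
    obtain ⟨γ, hγpos, hra, hrk, hsupp⟩ := G.walk_root hconn haJK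
    exact ⟨γ, ⟨hγpos, G.key_neg hJ' hK' hJK hγpos hsupp ⟨k, hkK, hrk⟩⟩, hra⟩
  have hNfin := G.Nset_finite (cs := cs) w
  have hLfin : L.Finite := by
    apply Set.Finite.subset
      (Set.Finite.biUnion hNfin (fun γ _ => (G.bas.repr γ).support.finite_toSet))
    intro a ha
    obtain ⟨γ, hγ, hra⟩ := hLsub a ha
    exact Set.mem_biUnion hγ (Finsupp.mem_support_iff.mpr hra)
  set LF : Finset B := hLfin.toFinset with hLFdef
  -- the recursive pushing lemma
  have key : ∀ (n : ℕ) (A : Finset B), LF.card - A.card ≤ n → (↑A : Set B) ⊆ L →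
      A.Nonempty → (∀ a ∈ A, a ∉ K) →
      ∃ u : W, ∀ γ, γ ∈ G.PhiPos → (∀ x, G.bas.repr γ x ≠ 0 ↔ x ∈ A) →
        G.ρ u γ ∈ G.Nset w := by
    intro n
    induction n with
    | zero =>
      intro A hcard hAL hAne hAK
      exfalso
      obtain ⟨a, haA⟩ := hAne
      obtain ⟨hJKa, k, hkK, hconn⟩ := hAL haA
      have hkA : k ∉ A := fun h => hAK k h hkK
      obtain ⟨x, hxA, t, htA, htS, hadjxt, hconn'⟩ := GeomRep.leave_set (M := M) A hconn haA hkA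
      have htL : t ∈ L := ⟨htS, k, hkK, hconn'⟩
      have hALF : A ⊆ LF := fun y hy => hLfin.mem_toFinset.mpr (hAL hy)
      have hAeq : A = LF := Finset.eq_of_subset_of_card_le hALF (by omega)
      exact htA (hAeq ▸ hLfin.mem_toFinset.mpr htL)
    | succ n ih =>
      intro A hcard hAL hAne hAK
      obtain ⟨a, haA⟩ := hAne
      obtain ⟨hJKa, k, hkK, hconn⟩ := hAL haA
      have hkA : k ∉ A := fun h => hAK k h hkK
      obtain ⟨x, hxA, t, htA, htS, hadjxt, hconn'⟩ := GeomRep.leave_set (M := M) A hconn haA hkA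
      have htL : t ∈ L := ⟨htS, k, hkK, hconn'⟩
      by_cases htK : t ∈ K
      · refine ⟨cs.simple t, ?_⟩
        intro γ hγpos hsγ
        have ht0 : G.bas.repr γ t = 0 := by
          by_contra h
          exact htA ((hsγ t).mp h)
        obtain ⟨h1, h2, h3⟩ := G.extension hγpos ht0 ⟨x, (hsγ x).mpr hxA, GeomRep.adj_symm (M := M) hadjxt⟩
        refine ⟨h1, ?_⟩
        apply G.key_neg hJ' hK' hJK h1 ?_ ⟨t, htK, h2⟩
        intro y hy
        rcases eq_or_ne y t with rfl | hyt
        · exact htS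
        · rw [h3 y hyt] at hy
          exact hLJK (hAL ((hsγ y).mp hy))
      · have hcard' : LF.card - (insert t A).card ≤ n := by
          rw [Finset.card_insert_of_notMem htA]
          omega
        have hAL' : (↑(insert t A) : Set B) ⊆ L := by
          intro y hy
          rcases Finset.mem_insert.mp (Finset.mem_coe.mp hy) with rfl | h
          · exact htL
          · exact hAL h
        have hAK' : ∀ a' ∈ insert t A, a' ∉ K := by
          intro a' ha'
          rcases Finset.mem_insert.mp ha' with rfl | h
          · exact htK
          · exact hAK a' h
        obtain ⟨u', hu'⟩ := ih (insert t A) hcard' hAL' ⟨t, Finset.mem_insert_self t A⟩ hAK'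
        refine ⟨u' * cs.simple t, ?_⟩
        intro γ hγpos hsγ
        have ht0 : G.bas.repr γ t = 0 := by
          by_contra h
          exact htA ((hsγ t).mp h)
        obtain ⟨h1, h2, h3⟩ := G.extension hγpos ht0 ⟨x, (hsγ x).mpr hxA, GeomRep.adj_symm (M := M) hadjxt⟩
        have hres := hu' (G.ρ (cs.simple t) γ) h1 ?_
        · rw [G.rho_mul_apply]
          exact hres
        · intro y
          rcases eq_or_ne y t with rfl | hyt
          · exact ⟨fun _ => Finset.mem_insert_self _ A, fun _ => h2⟩
          · rw [h3 y hyt, Finset.mem_insert]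
            constructor
            · intro h
              exact Or.inr ((hsγ y).mp h)
            · rintro (rfl | h)
              · exact absurd rfl hyt
              · exact (hsγ y).mpr h
  -- positive roots supported in L form a finite set
  have hposL : {γ | γ ∈ G.PhiPos ∧ ∀ t, G.bas.repr γ t ≠ 0 → t ∈ L}.Finite := by
    have hcover : {γ | γ ∈ G.PhiPos ∧ ∀ t, G.bas.repr γ t ≠ 0 → t ∈ L} ⊆
        ⋃ A ∈ LF.powerset, {γ | γ ∈ G.PhiPos ∧ ∀ x, G.bas.repr γ x ≠ 0 ↔ x ∈ A} := by
      rintro γ ⟨hγpos, hγsupp⟩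
      apply Set.mem_biUnion (show (G.bas.repr γ).support ∈ LF.powerset from ?_)
      · exact ⟨hγpos, fun x => Finsupp.mem_support_iff.symm⟩
      · rw [Finset.mem_powerset]
        intro y hy
        exact hLfin.mem_toFinset.mpr (hγsupp y (Finsupp.mem_support_iff.mp hy))
    apply Set.Finite.subset (Set.Finite.biUnion (LF.powerset.finite_toSet) ?_) hcover
    intro A hA
    have hAL : (↑A : Set B) ⊆ L := by
      intro y hy
      exact hLfin.mem_toFinset.mp (Finset.mem_powerset.mp hA hy)
    by_cases hAne : A.Nonempty
    · by_cases hAK : ∀ a ∈ A, a ∉ K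
      · obtain ⟨u, hu⟩ := key LF.card A (by omega) hAL hAne hAK
        apply Set.Finite.subset (hNfin.image (fun γ => G.ρ u⁻¹ γ))
        rintro γ ⟨hγpos, hγiff⟩
        exact ⟨G.ρ u γ, hu γ hγpos hγiff, by simp only [G.rho_inv_apply']⟩
      · push_neg at hAK
        obtain ⟨a, haA, haK⟩ := hAK
        apply Set.Finite.subset hNfin
        rintro γ ⟨hγpos, hγiff⟩
        refine ⟨hγpos, G.key_neg hJ' hK' hJK hγpos ?_ ⟨a, haK, (hγiff a).mpr haA⟩⟩
        intro y hy
        exact hLJK (hAL ((hγiff y).mp hy))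
    · apply Set.Finite.subset Set.finite_empty
      rintro γ ⟨hγpos, hγiff⟩
      exfalso
      have hz : G.bas.repr γ = 0 := by
        ext y
        by_contra h
        exact hAne ⟨y, (hγiff y).mp h⟩
      have : γ = 0 := by
        have := congrArg G.bas.repr.symm hz
        simpa using this
      exact G.ne_zero_of_mem_Phi (G.mem_Phi_of_mem_phiPos hγpos) this
  have hfinL : finType cs L := G.par_finite_of_pos_finite hposL
  have hfinLK : finType cs (L \ K) := GeomRep.finType_mono (cs := cs) Set.diff_subset hfinL
  set ν := w0 cs L * w0 cs (L \ K) with hνdef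
  have hparmono : par cs (L \ K) ≤ par cs L :=
    Subgroup.closure_mono (Set.image_mono Set.diff_subset)
  have hνmem : ν ∈ par cs L :=
    Subgroup.mul_mem _ (GeomRep.w0_mem (cs := cs) hfinL) (hparmono (GeomRep.w0_mem (cs := cs) hfinLK))
  have hNν : G.Nset ν ⊆ G.Nset w := by
    intro γ hγ
    have hsupp : ∀ t, G.bas.repr γ t ≠ 0 → t ∈ L := G.Nset_supp_subset hνmem hγ
    have hγpos := hγ.1
    by_cases hKs : ∃ k, k ∈ K ∧ G.bas.repr γ k ≠ 0
    · exact ⟨hγpos, G.key_neg hJ' hK' hJK hγpos (fun x hx => hLJK (hsupp x hx)) hKs⟩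
    · exfalso
      push_neg at hKs
      have hsupp' : ∀ t, G.bas.repr γ t ≠ 0 → t ∈ L \ K := by
        intro t ht
        refine ⟨hsupp t ht, fun hKt => ?_⟩
        exact ht (hKs t hKt)
      have hδ : G.ρ (w0 cs (L \ K)) γ ∈ G.PhiNeg := G.w0_neg_of_supp hfinLK hγpos hsupp'
      have hδsupp : ∀ t, G.bas.repr (G.ρ (w0 cs (L \ K)) γ) t ≠ 0 → t ∈ L := by
        intro t ht
        by_contra htL
        have hdiff := G.rho_par_diff_mem_span (GeomRep.w0_mem (cs := cs) hfinLK) γ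
        have h0 : G.bas.repr (G.ρ (w0 cs (L \ K)) γ - γ) t = 0 :=
          G.repr_eq_zero_of_mem_span hdiff (fun h => htL h.1)
        rw [map_sub, Finsupp.sub_apply] at h0
        have h1 : G.bas.repr γ t = 0 := by
          by_contra h
          exact htL (hsupp t h)
        rw [h1, sub_zero] at h0
        exact ht h0
      have hnegδ : -(G.ρ (w0 cs (L \ K)) γ) ∈ G.PhiPos := G.neg_mem_phiPos hδ
      have hnegδsupp : ∀ t, G.bas.repr (-(G.ρ (w0 cs (L \ K)) γ)) t ≠ 0 → t ∈ L := by
        intro t ht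
        rw [map_neg, Finsupp.neg_apply, neg_ne_zero] at ht
        exact hδsupp t ht
      have hfinal : G.ρ (w0 cs L) (-(G.ρ (w0 cs (L \ K)) γ)) ∈ G.PhiNeg :=
        G.w0_neg_of_supp hfinL hnegδ hnegδsupp
      have hcontr : G.ρ ν γ ∈ G.PhiPos := by
        have hval : G.ρ ν γ = -(G.ρ (w0 cs L) (-(G.ρ (w0 cs (L \ K)) γ))) := by
          rw [hνdef, G.rho_mul_apply, map_neg, neg_neg]
        rw [hval]
        exact G.neg_mem_phiPos hfinal
      exact G.not_mem_phiPos_and_phiNeg hcontr hγ.2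
  have hfin := G.length_additive_of_Nset_subset (cs.length ν) ν rfl w hNν
  exact ⟨hJKempty, hfinL, hfin⟩
end CoxCentralizer
end
end

section
/- Let J ⊆ S, let u ∈ W satisfy u·Π_J ⊆ Π, and let t ∈ S∖J be such that J_{∼t} is of finite type; put ν = w₀(J_{∼t})·w₀(J_{∼t}∖{t}). Then ℓ(uν⁻¹) < ℓ(u) + ℓ(ν) if and only if u·α_t ∈ Φ⁻. Moreover, if ν·α_r = α_r for all r ∈ J, so that (by the loop-generator characterization) ν = s_γ for the unique positive root γ ∈ Φ_{J∪{t}}^{⊥J} ∩ Φ⁺, then these conditions are also equivalent to u·γ ∈ Φ⁻. -/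
noncomputable section

namespace CoxCentralizer

open Classical

variable {B : Type*} {W : Type*} [Group W] {V : Type*} [AddCommGroup V] [Module ℝ V]

variable {M : CoxeterMatrix B} {cs : CoxeterSystem M W}

variable (cs : CoxeterSystem M W)

variable (G : GeomRep M cs V)

section Statement6Aux

private noncomputable def bas : Module.Basis B ℝ V := Module.Basis.mk G.indep G.spans

private lemma bas_coe : ⇑(bas cs G) = G.α := Module.Basis.coe_mk _ _

private lemma sum_eq_lc (c : B →₀ ℝ) :
    (c.sum fun i r => r • G.α i) = Finsupp.linearCombination ℝ G.α c :=
  (Finsupp.linearCombination_apply _ _).symm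

private lemma repr_sum (c : B →₀ ℝ) :
    (bas cs G).repr (c.sum fun i r => r • G.α i) = c := by
  rw [sum_eq_lc, ← bas_coe cs G, Module.Basis.repr_linearCombination]

private lemma total_repr' (v : V) :
    ((bas cs G).repr v).sum (fun i r => r • G.α i) = v := by
  rw [sum_eq_lc, ← bas_coe cs G, Module.Basis.linearCombination_repr]

private lemma pos_repr_nonneg {v : V} (hv : v ∈ G.PhiPos) (j : B) :
    0 ≤ (bas cs G).repr v j := by
  obtain ⟨-, c, hc, rfl⟩ := hv
  rw [repr_sum]; exact hc j

private lemma neg_repr_nonpos {v : V} (hv : v ∈ G.PhiNeg) (j : B) :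
    (bas cs G).repr v j ≤ 0 := by
  have h := pos_repr_nonneg cs G hv j
  rw [map_neg] at h
  simpa using h

private lemma mem_phiPos {v : V} (hv : v ∈ G.Phi)
    (h : ∀ j, 0 ≤ (bas cs G).repr v j) : v ∈ G.PhiPos :=
  ⟨hv, (bas cs G).repr v, h, (total_repr' cs G v).symm⟩

private lemma alpha_mem_Phi (i : B) : G.α i ∈ G.Phi :=
  ⟨1, i, by rw [map_one]; rfl⟩

private lemma smul_mem_Phi (w : W) {v : V} (hv : v ∈ G.Phi) : G.ρ w v ∈ G.Phi := by
  obtain ⟨x, i, rfl⟩ := hv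
  exact ⟨w * x, i, by rw [map_mul]; rfl⟩

private lemma form_self (i : B) : G.form (G.α i) (G.α i) = 1 := by
  have h := G.form_simple_fin i i (by rw [M.diagonal]; norm_num)
  rw [M.diagonal] at h
  norm_num [Real.cos_pi] at h
  exact h

private lemma root_form_self {γ : V} (h : γ ∈ G.Phi) : G.form γ γ = 1 := by
  obtain ⟨w, i, rfl⟩ := h
  rw [G.invariant]; exact form_self cs G i

private lemma zero_not_mem_Phi : (0 : V) ∉ G.Phi := by
  intro h
  have := root_form_self cs G h
  simp at this

private lemma pos_neg_disjoint {v : V} (h1 : v ∈ G.PhiPos) (h2 : v ∈ G.PhiNeg) : False := by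
  have hv0 : v = 0 := by
    have : (bas cs G).repr v = 0 := by
      ext j
      exact le_antisymm (neg_repr_nonpos cs G h2 j) (pos_repr_nonneg cs G h1 j)
    simpa using congrArg (bas cs G).repr.symm this
  exact zero_not_mem_Phi cs G (hv0 ▸ h1.1)

private lemma alpha_mem_phiPos (i : B) : G.α i ∈ G.PhiPos := by
  refine ⟨alpha_mem_Phi cs G i, Finsupp.single i 1, ?_, ?_⟩
  · intro j
    by_cases h : i = j <;> simp [Finsupp.single_apply, h]
  · rw [Finsupp.sum_single_index] <;> simp

private lemma act_simple_self (i : B) : G.ρ (cs.simple i) (G.α i) = - G.α i := by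
  rw [G.simple_act, form_self]
  norm_num [two_smul]

private lemma neg_mem_phiNeg {v : V} (h : v ∈ G.PhiPos) : -v ∈ G.PhiNeg := by
  simpa [GeomRep.PhiNeg] using h

private lemma mem_phiNeg_iff {v : V} : v ∈ G.PhiNeg ↔ -v ∈ G.PhiPos := Iff.rfl

private lemma sin_rec (x θ : ℝ) :
    Real.sin (x + θ) = 2 * Real.cos θ * Real.sin x - Real.sin (x - θ) := by
  rw [Real.sin_add, Real.sin_sub]; ring

private lemma dihedral_abs (i j : B) (c : ℝ)
    (hfij : G.form (G.α i) (G.α j) = -c)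
    (S : ℕ → ℝ) (hS0 : S 0 = 0) (hS1 : S 1 = 1)
    (hrec : ∀ n, S (n+2) = 2*c*S (n+1) - S n) :
    ∀ k, G.ρ (cs.wordProd (CoxeterSystem.alternatingWord i j k)) (G.α i)
      = (if Even k then S (k+1) else S k) • G.α i
        + (if Even k then S k else S (k+1)) • G.α j := by
  have e1 : G.ρ (cs.simple j) (G.α i) = G.α i + (2*c) • G.α j := by
    rw [G.simple_act, G.symm, hfij]
    module
  have e2 : G.ρ (cs.simple j) (G.α j) = - G.α j := act_simple_self cs G j
  have e3 : G.ρ (cs.simple i) (G.α j) = G.α j + (2*c) • G.α i := by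
    rw [G.simple_act, hfij]
    module
  have e4 : G.ρ (cs.simple i) (G.α i) = - G.α i := act_simple_self cs G i
  intro k
  induction k with
  | zero =>
    simp [CoxeterSystem.alternatingWord, hS0, hS1]
  | succ k ih =>
    rw [CoxeterSystem.alternatingWord_succ', cs.wordProd_cons, map_mul]
    have happ : ∀ (x y : V ≃ₗ[ℝ] V) (v : V), (x * y) v = x (y v) := fun _ _ _ => rfl
    rw [happ, ih]
    by_cases hk : Even k
    · have hk1 : ¬ Even (k+1) := by simp [Nat.even_add_one, hk]
      simp only [hk, hk1, if_true, if_false, if_pos, if_neg, not_false_iff]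
      rw [map_add, map_smul, map_smul, e1, e2, hrec k]
      module
    · have hk1 : Even (k+1) := by simp [Nat.even_add_one, hk]
      simp only [hk, hk1, if_true, if_false, if_pos, if_neg, not_false_iff]
      rw [map_add, map_smul, map_smul, e3, e4, hrec k]
      module

private lemma cone_alt (i j : B) (hij : i ≠ j) (k : ℕ) (hk : M i j = 0 ∨ k + 1 ≤ M i j) :
    ∃ A B2 : ℝ, 0 ≤ A ∧ 0 ≤ B2 ∧
      G.ρ (cs.wordProd (CoxeterSystem.alternatingWord i j k)) (G.α i)
        = A • G.α i + B2 • G.α j := by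
  rcases hk with hm | hk
  · have habs := dihedral_abs cs G i j 1 (by rw [G.form_simple_inf i j hm])
      (fun n => (n : ℝ)) (by simp) (by simp) (fun n => by push_cast; try ring) k
    refine ⟨_, _, ?_, ?_, habs⟩ <;> · split <;> positivity
  · have hm0 : M i j ≠ 0 := by omega
    have hm2 : 2 ≤ M i j := by have := M.off_diagonal i j hij; omega
    set θ := Real.pi / (M i j : ℝ) with hθ
    have hmpos : (0:ℝ) < (M i j : ℝ) := by exact_mod_cast Nat.pos_of_ne_zero hm0
    have hθpos : 0 < θ := by rw [hθ]; positivity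
    have hθltpi : θ < Real.pi := by
      rw [hθ]
      exact div_lt_self Real.pi_pos (by exact_mod_cast by omega : (1:ℝ) < (M i j : ℝ))
    have hsin : 0 < Real.sin θ := Real.sin_pos_of_pos_of_lt_pi hθpos hθltpi
    have hmθ : (M i j : ℝ) * θ = Real.pi := by
      rw [hθ, mul_div_cancel₀ _ (by exact_mod_cast hm0)]
    have hsinnn : ∀ n : ℕ, n ≤ M i j → 0 ≤ Real.sin (n * θ) := by
      intro n hn
      apply Real.sin_nonneg_of_nonneg_of_le_pi
      · positivity
      · rw [← hmθ]
        apply mul_le_mul_of_nonneg_right _ hθpos.le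
        exact_mod_cast hn
    have habs := dihedral_abs cs G i j (Real.cos θ)
      (by rw [G.form_simple_fin i j hm0])
      (fun n => Real.sin (n * θ) / Real.sin θ)
      (by simp) (by simp [div_self hsin.ne'])
      (fun n => by
        have h := sin_rec (((n:ℝ)+1)*θ) θ
        have e1 : ((n:ℝ)+1)*θ + θ = ((n:ℝ)+2)*θ := by ring
        have e2 : ((n:ℝ)+1)*θ - θ = (n:ℝ)*θ := by ring
        rw [e1, e2] at h
        push_cast
        rw [h]
        ring) k
    refine ⟨_, _, ?_, ?_, habs⟩ <;>
    · split <;>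
      · apply div_nonneg _ hsin.le
        apply hsinnn
        omega

private lemma rho_mul_apply (x y : W) (v : V) : G.ρ (x * y) v = G.ρ x (G.ρ y v) := by
  rw [map_mul]; rfl

private lemma stripQ : ∀ (n : ℕ) (x : W) (i j : B), i ≠ j → cs.length x = n →
    cs.length x < cs.length (x * cs.simple i) →
    ∃ (u : W) (k : ℕ), x = u * cs.wordProd (CoxeterSystem.alternatingWord i j k) ∧
      cs.length x = cs.length u + k ∧
      cs.length u < cs.length (u * cs.simple i) ∧
      cs.length u < cs.length (u * cs.simple j) := by
  intro n
  induction n using Nat.strong_induction_on with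
  | _ n IH =>
    intro x i j hij hn hi
    by_cases hj : cs.length x < cs.length (x * cs.simple j)
    · exact ⟨x, 0, by simp [CoxeterSystem.alternatingWord], by simp, hi, hj⟩
    · have hj' : cs.length (x * cs.simple j) < cs.length x :=
        lt_of_le_of_ne (not_lt.mp hj) (cs.length_mul_simple_ne x j)
      set x' := x * cs.simple j with hx'
      have hxx : x' * cs.simple j = x := by
        rw [hx', mul_assoc, cs.simple_mul_simple_self, mul_one]
      have hlt : cs.length x' < n := hn ▸ hj'
      have hasc : cs.length x' < cs.length (x' * cs.simple j) := by rw [hxx]; exact hj'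
      obtain ⟨u, k, he, hl, hai, haj⟩ := IH (cs.length x') hlt x' j i hij.symm rfl hasc
      refine ⟨u, k + 1, ?_, ?_, haj, hai⟩
      · rw [CoxeterSystem.alternatingWord_succ, cs.wordProd_concat, ← mul_assoc, ← he, hxx]
      · have hstep : cs.length x = cs.length x' + 1 := by
          rcases cs.length_mul_simple x j with h | h
          · rw [← hx'] at h; omega
          · rw [← hx'] at h; omega
        omega

private lemma ascent_coords : ∀ (n : ℕ) (w : W), cs.length w = n → ∀ i : B,
    cs.length w < cs.length (w * cs.simple i) →
    ∀ p : B, 0 ≤ (bas cs G).repr (G.ρ w (G.α i)) p := by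
  intro n
  induction n using Nat.strong_induction_on with
  | _ n IH =>
    intro w hn i hi p
    rcases eq_or_ne w 1 with rfl | hw
    · rw [map_one]
      exact pos_repr_nonneg cs G (alpha_mem_phiPos cs G i) p
    · obtain ⟨j, hj⟩ := cs.exists_rightDescent_of_ne_one hw
      have hjlt : cs.length (w * cs.simple j) < cs.length w := hj
      have hij : i ≠ j := by rintro rfl; omega
      obtain ⟨u, k, he, hl, hai, haj⟩ := stripQ cs (cs.length w) w i j hij rfl hi
      have hk0 : k ≠ 0 := by
        rintro rfl
        simp only [CoxeterSystem.alternatingWord, cs.wordProd_nil, mul_one] at he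
        rw [he] at hjlt
        omega
      have hbound : M i j = 0 ∨ k + 1 ≤ M i j := by
        by_contra hc
        push_neg at hc
        obtain ⟨hm0, hkk⟩ := hc
        rcases Nat.lt_or_ge (M i j) k with hgt | hge
        · have hnr := cs.not_isReduced_alternatingWord i j hm0 hgt
          have hle := cs.length_wordProd_le (CoxeterSystem.alternatingWord i j k)
          rw [CoxeterSystem.length_alternatingWord] at hle
          have hne : cs.length (cs.wordProd (CoxeterSystem.alternatingWord i j k)) ≠ k := by
            intro h
            exact hnr (by rw [CoxeterSystem.IsReduced, h, CoxeterSystem.length_alternatingWord])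
          have h2 := cs.length_mul_le u (cs.wordProd (CoxeterSystem.alternatingWord i j k))
          rw [← he] at h2
          omega
        · have hkm : k = M i j := by omega
          have hm2 : 2 ≤ M i j := by
            have := M.off_diagonal i j hij
            omega
          have hbr : cs.wordProd (CoxeterSystem.alternatingWord i j k) =
              cs.wordProd (CoxeterSystem.alternatingWord j i k) := by
            have hsub := cs.prod_alternatingWord_eq_prod_alternatingWord_sub i j k (by omega)
            rwa [show M i j * 2 - k = k by omega] at hsub
          have hm1 : k = (k - 1) + 1 := by omega
          have hwi : w * cs.simple i = u * cs.wordProd (CoxeterSystem.alternatingWord i j (k-1)) := by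
            rw [he, hbr, hm1, CoxeterSystem.alternatingWord_succ, cs.wordProd_concat, ← hm1]
            rw [mul_assoc, mul_assoc, cs.simple_mul_simple_self, mul_one]
          have h3 := cs.length_mul_le u (cs.wordProd (CoxeterSystem.alternatingWord i j (k-1)))
          have h4 := cs.length_wordProd_le (CoxeterSystem.alternatingWord i j (k-1))
          rw [CoxeterSystem.length_alternatingWord] at h4
          rw [← hwi] at h3
          omega
      obtain ⟨A, B2, hA, hB, hcone⟩ := cone_alt cs G i j hij k hbound
      have hwact : G.ρ w (G.α i) = A • G.ρ u (G.α i) + B2 • G.ρ u (G.α j) := by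
        rw [he, rho_mul_apply, hcone, map_add, map_smul, map_smul]
      rw [hwact, map_add, map_smul, map_smul, Finsupp.add_apply, Finsupp.smul_apply,
        Finsupp.smul_apply, smul_eq_mul, smul_eq_mul]
      have hu : cs.length u < n := by omega
      exact add_nonneg (mul_nonneg hA (IH (cs.length u) hu u rfl i hai p))
        (mul_nonneg hB (IH (cs.length u) hu u rfl j haj p))

private lemma mem_pos_of_ascent {w : W} {i : B}
    (h : cs.length w < cs.length (w * cs.simple i)) : G.ρ w (G.α i) ∈ G.PhiPos :=
  mem_phiPos cs G (smul_mem_Phi cs G w (alpha_mem_Phi cs G i))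
    (ascent_coords cs G _ w rfl i h)

private lemma mem_neg_of_descent {w : W} {i : B}
    (h : cs.length (w * cs.simple i) < cs.length w) : G.ρ w (G.α i) ∈ G.PhiNeg := by
  set w' := w * cs.simple i with hw'
  have hw : w = w' * cs.simple i := by
    rw [hw', mul_assoc, cs.simple_mul_simple_self, mul_one]
  have hasc : cs.length w' < cs.length (w' * cs.simple i) := by rw [← hw]; exact h
  have hpos := mem_pos_of_ascent cs G hasc
  have heq : G.ρ w (G.α i) = - (G.ρ w' (G.α i)) := by
    rw [hw, rho_mul_apply, act_simple_self, map_neg]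
  rw [mem_phiNeg_iff, heq, neg_neg]
  exact hpos

private lemma pos_iff_ascent {w : W} {i : B} :
    G.ρ w (G.α i) ∈ G.PhiPos ↔ cs.length w < cs.length (w * cs.simple i) := by
  constructor
  · intro h
    rcases Nat.lt_or_ge (cs.length w) (cs.length (w * cs.simple i)) with hlt | hge
    · exact hlt
    · have hgt : cs.length (w * cs.simple i) < cs.length w :=
        lt_of_le_of_ne hge (cs.length_mul_simple_ne w i)
      exact absurd (mem_neg_of_descent cs G hgt) (fun hn => pos_neg_disjoint cs G h hn)
  · exact mem_pos_of_ascent cs G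

private lemma neg_iff_descent {w : W} {i : B} :
    G.ρ w (G.α i) ∈ G.PhiNeg ↔ cs.length (w * cs.simple i) < cs.length w := by
  constructor
  · intro h
    rcases Nat.lt_or_ge (cs.length (w * cs.simple i)) (cs.length w) with hlt | hge
    · exact hlt
    · have hgt : cs.length w < cs.length (w * cs.simple i) :=
        lt_of_le_of_ne hge (Ne.symm (cs.length_mul_simple_ne w i))
      exact absurd h (fun hn => pos_neg_disjoint cs G (mem_pos_of_ascent cs G hgt) hn)
  · exact mem_neg_of_descent cs G

private lemma dichotomy {γ : V} (h : γ ∈ G.Phi) : γ ∈ G.PhiPos ∨ γ ∈ G.PhiNeg := by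
  obtain ⟨w, i, rfl⟩ := h
  rcases Nat.lt_or_ge (cs.length w) (cs.length (w * cs.simple i)) with hlt | hge
  · exact Or.inl (mem_pos_of_ascent cs G hlt)
  · exact Or.inr (mem_neg_of_descent cs G
      (lt_of_le_of_ne hge (cs.length_mul_simple_ne w i)))

private lemma eq_simple_of_pos_neg {β : V} {i : B} (hβ : β ∈ G.PhiPos)
    (hneg : G.ρ (cs.simple i) β ∈ G.PhiNeg) : β = G.α i := by
  have hco : ∀ j, j ≠ i → (bas cs G).repr β j = 0 := by
    intro j hj
    have h1 : (bas cs G).repr (G.ρ (cs.simple i) β) j = (bas cs G).repr β j := by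
      rw [G.simple_act, map_sub, map_smul, Finsupp.sub_apply, Finsupp.smul_apply]
      rw [show G.α i = bas cs G i from (bas_coe cs G ▸ rfl), Module.Basis.repr_self,
        Finsupp.single_apply, if_neg (fun h => hj h.symm)]
      simp
    have h2 := neg_repr_nonpos cs G hneg j
    have h3 := pos_repr_nonneg cs G hβ j
    rw [h1] at h2
    linarith
  set c := (bas cs G).repr β i with hc
  have hβeq : β = c • G.α i := by
    apply (bas cs G).repr.injective
    rw [map_smul]
    rw [show G.α i = bas cs G i from (bas_coe cs G ▸ rfl), Module.Basis.repr_self]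
    ext j
    rcases eq_or_ne j i with rfl | hj
    · simp [hc]
    · rw [Finsupp.smul_apply, Finsupp.single_apply, if_neg (fun h => hj h.symm)]
      simp [hco j hj]
  have hcpos : 0 ≤ c := pos_repr_nonneg cs G hβ i
  have hc1 : c = 1 := by
    have h1 := root_form_self cs G hβ.1
    nth_rewrite 1 [hβeq] at h1
    nth_rewrite 1 [hβeq] at h1
    simp only [map_smul, LinearMap.smul_apply, smul_eq_mul] at h1
    rw [form_self cs G i] at h1
    nlinarith
  rw [hβeq, hc1, one_smul]

private lemma simple_act_phiPos {β : V} {i : B} (hβ : β ∈ G.PhiPos) (hne : β ≠ G.α i) :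
    G.ρ (cs.simple i) β ∈ G.PhiPos := by
  rcases dichotomy cs G (smul_mem_Phi cs G _ hβ.1) with h | h
  · exact h
  · exact absurd (eq_simple_of_pos_neg cs G hβ h) hne

private lemma len_add_iff : ∀ (n : ℕ) (x : W), cs.length x = n → ∀ u : W,
    (cs.length (u * x) = cs.length u + cs.length x ↔
      ∀ β ∈ G.PhiPos, G.ρ x β ∈ G.PhiNeg → G.ρ (u * x) β ∈ G.PhiNeg) := by
  intro n
  induction n using Nat.strong_induction_on with
  | _ n IH =>
    intro x hn u
    rcases eq_or_ne x 1 with rfl | hx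
    · constructor
      · intro _ β hβ hneg
        rw [map_one] at hneg
        exact absurd hneg (fun h => pos_neg_disjoint cs G hβ h)
      · intro _
        simp
    · obtain ⟨i, hdes⟩ := cs.exists_rightDescent_of_ne_one hx
      have hdlt : cs.length (x * cs.simple i) < cs.length x := hdes
      set x' := x * cs.simple i with hx'
      have hxe : x = x' * cs.simple i := by
        rw [hx', mul_assoc, cs.simple_mul_simple_self, mul_one]
      have hlen : cs.length x = cs.length x' + 1 := by
        rcases cs.length_mul_simple x i with h | h
        · rw [← hx'] at h; omega
        · rw [← hx'] at h; omega
      have hasc : cs.length x' < cs.length (x' * cs.simple i) := by rw [← hxe]; exact hdlt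
      have hx'pos : G.ρ x' (G.α i) ∈ G.PhiPos := mem_pos_of_ascent cs G hasc
      have lhs_iff : cs.length (u * x) = cs.length u + cs.length x ↔
          (cs.length (u * x') = cs.length u + cs.length x' ∧
            cs.length (u * x') < cs.length (u * x' * cs.simple i)) := by
        constructor
        · intro h
          have h1 := cs.length_mul_le u x'
          have h2 : u * x = (u * x') * cs.simple i := by rw [hxe, ← mul_assoc]
          have hl2 : cs.length (u * x) = cs.length (u * x' * cs.simple i) := by rw [h2]
          rcases cs.length_mul_simple (u * x') i with h3 | h3 <;> constructor <;> omega
        · rintro ⟨h1, h2⟩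
          have h2' : cs.length (u * x' * cs.simple i) = cs.length (u * x') + 1 := by
            rcases cs.length_mul_simple (u * x') i with h3 | h3 <;> omega
          have h4 : cs.length (u * x) = cs.length (u * x' * cs.simple i) := by
            rw [hxe, ← mul_assoc]
          have h5 : cs.length (x' * cs.simple i) = cs.length x := by rw [← hxe]
          omega
      have rhs_iff : (∀ β ∈ G.PhiPos, G.ρ x β ∈ G.PhiNeg → G.ρ (u * x) β ∈ G.PhiNeg) ↔
          ((∀ β ∈ G.PhiPos, G.ρ x' β ∈ G.PhiNeg → G.ρ (u * x') β ∈ G.PhiNeg) ∧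
            G.ρ (u * x') (G.α i) ∈ G.PhiPos) := by
        constructor
        · intro h
          constructor
          · intro δ hδ hδneg
            have hδi : δ ≠ G.α i := by
              rintro rfl
              exact pos_neg_disjoint cs G hx'pos hδneg
            have hβ : G.ρ (cs.simple i) δ ∈ G.PhiPos := simple_act_phiPos cs G hδ hδi
            have hxβ : G.ρ x (G.ρ (cs.simple i) δ) ∈ G.PhiNeg := by
              rw [← rho_mul_apply, ← hx']
              exact hδneg
            have hres := h _ hβ hxβ
            rw [← rho_mul_apply, mul_assoc, ← hx'] at hres
            exact hres
          · have h1 : G.ρ x (G.α i) ∈ G.PhiNeg := by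
              rw [hxe, rho_mul_apply, act_simple_self, map_neg, mem_phiNeg_iff, neg_neg]
              exact hx'pos
            have h2 := h _ (alpha_mem_phiPos cs G i) h1
            rw [hxe, ← mul_assoc, rho_mul_apply, act_simple_self, map_neg, mem_phiNeg_iff,
              neg_neg] at h2
            exact h2
        · rintro ⟨h, hpos⟩ β hβ hβneg
          rcases eq_or_ne β (G.α i) with rfl | hne
          · rw [hxe, ← mul_assoc, rho_mul_apply, act_simple_self, map_neg, mem_phiNeg_iff,
              neg_neg]
            exact hpos
          · have hδ : G.ρ (cs.simple i) β ∈ G.PhiPos := simple_act_phiPos cs G hβ hne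
            have hx'δ : G.ρ x' (G.ρ (cs.simple i) β) ∈ G.PhiNeg := by
              rw [← rho_mul_apply, ← hxe]
              exact hβneg
            have hres := h _ hδ hx'δ
            rw [← rho_mul_apply, mul_assoc, ← hxe] at hres
            exact hres
      rw [lhs_iff, rhs_iff, IH (cs.length x') (by omega) x' rfl u]
      exact and_congr Iff.rfl (pos_iff_ascent cs G).symm

private lemma lt_iff_exists_inv (u v : W) :
    (cs.length (u * v⁻¹) < cs.length u + cs.length v) ↔
      ∃ γ ∈ G.PhiPos, G.ρ v γ ∈ G.PhiNeg ∧ G.ρ u γ ∈ G.PhiNeg := by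
  have hle : cs.length (u * v⁻¹) ≤ cs.length u + cs.length v := by
    have h := cs.length_mul_le u v⁻¹
    rwa [cs.length_inv] at h
  have heq := len_add_iff cs G (cs.length v⁻¹) v⁻¹ rfl u
  rw [cs.length_inv] at heq
  constructor
  · intro hlt
    have hne : ¬ (∀ β ∈ G.PhiPos, G.ρ v⁻¹ β ∈ G.PhiNeg → G.ρ (u * v⁻¹) β ∈ G.PhiNeg) := by
      intro h
      have := heq.mpr h
      omega
    push_neg at hne
    obtain ⟨β, hβ, hvβ, huβ⟩ := hne
    refine ⟨- (G.ρ v⁻¹ β), hvβ, ?_, ?_⟩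
    · rw [map_neg]
      have hvv : G.ρ v (G.ρ v⁻¹ β) = β := by
        rw [← rho_mul_apply, mul_inv_cancel, map_one]
        rfl
      rw [hvv]
      exact neg_mem_phiNeg cs G hβ
    · rw [map_neg, mem_phiNeg_iff, neg_neg, ← rho_mul_apply]
      rcases dichotomy cs G (smul_mem_Phi cs G (u * v⁻¹) hβ.1) with h | h
      · exact h
      · exact absurd h huβ
  · rintro ⟨γ, hγ, hvγ, huγ⟩
    rcases lt_or_eq_of_le hle with h | h
    · exact h
    exfalso
    have hall := heq.mp h
    have hβpos : - G.ρ v γ ∈ G.PhiPos := hvγ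
    have hv' : G.ρ v⁻¹ (- G.ρ v γ) ∈ G.PhiNeg := by
      have hvv2 : G.ρ v⁻¹ (G.ρ v γ) = γ := by
        rw [← rho_mul_apply, inv_mul_cancel, map_one]
        rfl
      rw [map_neg, hvv2]
      exact neg_mem_phiNeg cs G hγ
    have hfin := hall _ hβpos hv'
    have heq2 : G.ρ (u * v⁻¹) (- G.ρ v γ) = - G.ρ u γ := by
      rw [map_neg, ← rho_mul_apply, inv_mul_cancel_right]
    rw [heq2] at hfin
    exact pos_neg_disjoint cs G huγ hfin

private lemma coords_act (w : W) (v : V) (j : B) :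
    (bas cs G).repr (G.ρ w v) j
      = ((bas cs G).repr v).sum (fun i r => r * (bas cs G).repr (G.ρ w (G.α i)) j) := by
  conv_lhs => rw [← total_repr' cs G v]
  rw [map_finsuppSum, map_finsuppSum, Finsupp.sum_apply]
  refine Finsupp.sum_congr ?_
  intro i _
  rw [map_smul, map_smul, Finsupp.smul_apply, smul_eq_mul]

private lemma par_diff {K : Set B} {w : W} (hw : w ∈ par cs K) :
    ∀ v : V, G.ρ w v - v ∈ Submodule.span ℝ (G.α '' K) := by
  have hw' : w ∈ Subgroup.closure (cs.simple '' K) := hw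
  refine Subgroup.closure_induction
    (p := fun g _ => ∀ v : V, G.ρ g v - v ∈ Submodule.span ℝ (G.α '' K))
    ?_ ?_ ?_ ?_ hw'
  · intro x hx v
    obtain ⟨i, hi, rfl⟩ := hx
    rw [G.simple_act]
    have hmem : G.α i ∈ G.α '' K := ⟨i, hi, rfl⟩
    have : v - (2 * G.form (G.α i) v) • G.α i - v = -((2 * G.form (G.α i) v) • G.α i) := by
      abel
    rw [this]
    exact neg_mem (Submodule.smul_mem _ _ (Submodule.subset_span hmem))
  · intro v
    have h1 : G.ρ 1 v = v := by rw [map_one]; rfl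
    rw [h1, sub_self]
    exact zero_mem _
  · intro x y hx hy ihx ihy v
    have h : G.ρ (x * y) v - v = (G.ρ x (G.ρ y v) - G.ρ y v) + (G.ρ y v - v) := by
      rw [rho_mul_apply]; abel
    rw [h]
    exact add_mem (ihx _) (ihy _)
  · intro x hx ihx v
    have h1 : G.ρ x (G.ρ x⁻¹ v) = v := by
      rw [← rho_mul_apply, mul_inv_cancel, map_one]; rfl
    have h : G.ρ x⁻¹ v - v = -(G.ρ x (G.ρ x⁻¹ v) - G.ρ x⁻¹ v) := by
      rw [h1]; abel
    rw [h]
    exact neg_mem (ihx _)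

private lemma span_coords {K : Set B} {x : V} (hx : x ∈ Submodule.span ℝ (G.α '' K)) :
    ∀ j ∉ K, (bas cs G).repr x j = 0 := by
  induction hx using Submodule.span_induction with
  | mem y hy =>
    obtain ⟨i, hi, rfl⟩ := hy
    intro j hj
    rw [show G.α i = bas cs G i from (bas_coe cs G ▸ rfl), Module.Basis.repr_self,
      Finsupp.single_apply, if_neg]
    rintro rfl
    exact hj hi
  | zero => intro j _; simp
  | add y z hy hz ihy ihz =>
    intro j hj
    rw [map_add, Finsupp.add_apply, ihy j hj, ihz j hj, add_zero]
  | smul a y hy ihy =>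
    intro j hj
    rw [map_smul, Finsupp.smul_apply, ihy j hj, smul_zero]

private lemma w0_max {K : Set B} (hfin : finType cs K) :
    w0 cs K ∈ par cs K ∧ ∀ u ∈ par cs K, cs.length u ≤ cs.length (w0 cs K) := by
  have hex : ∃ w ∈ par cs K, ∀ u ∈ par cs K, cs.length u ≤ cs.length w := by
    obtain ⟨w, hw, hmax⟩ :=
      Set.exists_max_image (par cs K : Set W) cs.length hfin ⟨1, one_mem _⟩
    exact ⟨w, hw, hmax⟩
  rw [w0, dif_pos hex]
  exact ⟨hex.choose_spec.1, hex.choose_spec.2⟩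

private lemma w0_simple_neg {K : Set B} (hfin : finType cs K) {i : B} (hi : i ∈ K) :
    G.ρ (w0 cs K) (G.α i) ∈ G.PhiNeg := by
  obtain ⟨hmem, hmax⟩ := w0_max cs hfin
  rw [neg_iff_descent]
  have h1 : w0 cs K * cs.simple i ∈ par cs K :=
    mul_mem hmem (Subgroup.subset_closure ⟨i, hi, rfl⟩)
  have h2 := hmax _ h1
  have h3 := cs.length_mul_simple_ne (w0 cs K) i
  omega

private lemma w0_neg_of_pos {K : Set B} (hfin : finType cs K) {β : V} (hβ : β ∈ G.PhiPos)
    (hsupp : ∀ j ∉ K, (bas cs G).repr β j = 0) : G.ρ (w0 cs K) β ∈ G.PhiNeg := by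
  have hco : ∀ j, (bas cs G).repr (G.ρ (w0 cs K) β) j ≤ 0 := by
    intro j
    rw [coords_act, Finsupp.sum]
    apply Finset.sum_nonpos
    intro i hi
    have hi' : (bas cs G).repr β i ≠ 0 := Finsupp.mem_support_iff.mp hi
    have hiK : i ∈ K := by
      by_contra h
      exact hi' (hsupp i h)
    exact mul_nonpos_iff.mpr (Or.inl ⟨pos_repr_nonneg cs G hβ i,
      neg_repr_nonpos cs G (w0_simple_neg cs G hfin hiK) j⟩)
  rcases dichotomy cs G (smul_mem_Phi cs G _ hβ.1) with h | h
  · exfalso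
    have h0 : G.ρ (w0 cs K) β = 0 := by
      have hz : (bas cs G).repr (G.ρ (w0 cs K) β) = 0 := by
        ext j
        exact le_antisymm (hco j) (pos_repr_nonneg cs G h j)
      simpa using congrArg (bas cs G).repr.symm hz
    exact zero_not_mem_Phi cs G (h0 ▸ smul_mem_Phi cs G _ hβ.1)
  · exact h

private lemma t_mem_K (J : Set B) (t : B) : t ∈ compUnion M J {t} :=
  ⟨Or.inr rfl, t, rfl, Relation.ReflTransGen.refl⟩

private lemma K_sub (J : Set B) (t : B) : compUnion M J {t} ⊆ J ∪ {t} := fun _ ha => ha.1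

private lemma par_mono {K1 K2 : Set B} (h : K1 ⊆ K2) : par cs K1 ≤ par cs K2 :=
  Subgroup.closure_mono (Set.image_mono h)

private lemma finType_diff {K : Set B} (hfin : finType cs K) (A : Set B) :
    finType cs (K \ A) :=
  hfin.subset (par_mono cs Set.diff_subset)

private lemma nu_mem (J : Set B) (t : B) :
    nu cs J t ∈ par cs (compUnion M J {t}) := by
  rw [nu]
  refine mul_mem ?_ ?_
  · by_cases h : ∃ w ∈ par cs (compUnion M J {t}),
        ∀ u ∈ par cs (compUnion M J {t}), cs.length u ≤ cs.length w
    · rw [w0, dif_pos h]; exact h.choose_spec.1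
    · rw [w0, dif_neg h]; exact one_mem _
  · have hsub := par_mono cs (Set.diff_subset : compUnion M J {t} \ {t} ⊆ compUnion M J {t})
    by_cases h : ∃ w ∈ par cs (compUnion M J {t} \ {t}),
        ∀ u ∈ par cs (compUnion M J {t} \ {t}), cs.length u ≤ cs.length w
    · rw [w0, dif_pos h]; exact hsub h.choose_spec.1
    · rw [w0, dif_neg h]; exact one_mem _

private lemma nu_alpha_t_neg (J : Set B) (t : B) (ht : t ∉ J)
    (hfin : finType cs (compUnion M J {t})) :
    G.ρ (nu cs J t) (G.α t) ∈ G.PhiNeg := by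
  have hfin' : finType cs (compUnion M J {t} \ {t}) := finType_diff cs hfin {t}
  set x := G.ρ (w0 cs (compUnion M J {t} \ {t})) (G.α t) with hx
  have hdiff := par_diff cs G (w0_max cs hfin').1 (G.α t)
  have hαt : (bas cs G).repr (G.α t) t = 1 := by
    rw [show G.α t = bas cs G t from (bas_coe cs G ▸ rfl), Module.Basis.repr_self,
      Finsupp.single_apply, if_pos rfl]
  have hxt : (bas cs G).repr x t = 1 := by
    have h1 : (bas cs G).repr (x - G.α t) t = 0 :=
      span_coords cs G hdiff t (by simp)
    rw [map_sub, Finsupp.sub_apply] at h1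
    linarith
  have hxoff : ∀ j ∉ compUnion M J {t}, (bas cs G).repr x j = 0 := by
    intro j hj
    have h1 : (bas cs G).repr (x - G.α t) j = 0 := by
      apply span_coords cs G hdiff j
      intro hmem
      exact hj hmem.1
    have hjt : j ≠ t := by
      intro h
      rw [h] at hj
      exact hj (t_mem_K J t)
    have h2 : (bas cs G).repr (G.α t) j = 0 := by
      rw [show G.α t = bas cs G t from (bas_coe cs G ▸ rfl), Module.Basis.repr_self,
        Finsupp.single_apply, if_neg (fun h => hjt h.symm)]
    rw [map_sub, Finsupp.sub_apply] at h1
    linarith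
  have hxPhi : x ∈ G.Phi := smul_mem_Phi cs G _ (alpha_mem_Phi cs G t)
  have hxpos : x ∈ G.PhiPos := by
    rcases dichotomy cs G hxPhi with h | h
    · exact h
    · exfalso
      have h1 := neg_repr_nonpos cs G h t
      rw [hxt] at h1
      linarith
  have hres := w0_neg_of_pos cs G hfin hxpos hxoff
  have hnu : G.ρ (nu cs J t) (G.α t) = G.ρ (w0 cs (compUnion M J {t})) x := by
    rw [nu, rho_mul_apply]
  rw [hnu]
  exact hres

private lemma inv_supp (J : Set B) (t : B) {γ : V} (hγ : γ ∈ G.PhiPos)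
    (hneg : G.ρ (nu cs J t) γ ∈ G.PhiNeg) :
    ∀ j ∉ compUnion M J {t}, (bas cs G).repr γ j = 0 := by
  intro j hj
  have hdiff := par_diff cs G (nu_mem cs J t) γ
  have h1 : (bas cs G).repr (G.ρ (nu cs J t) γ - γ) j = 0 :=
    span_coords cs G hdiff j hj
  rw [map_sub, Finsupp.sub_apply] at h1
  have h2 := neg_repr_nonpos cs G hneg j
  have h3 := pos_repr_nonneg cs G hγ j
  linarith

private lemma u_pos_act {J : Set B} {u : W} (hJ : ∀ r ∈ J, G.ρ u (G.α r) ∈ G.PhiPos)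
    {t : B} (hupos : G.ρ u (G.α t) ∈ G.PhiPos) {γ : V} (hγ : γ ∈ G.PhiPos)
    (hsupp : ∀ j, j ∉ J → j ≠ t → (bas cs G).repr γ j = 0) :
    G.ρ u γ ∉ G.PhiNeg := by
  intro hneg
  have hco : ∀ j, 0 ≤ (bas cs G).repr (G.ρ u γ) j := by
    intro j
    rw [coords_act, Finsupp.sum]
    apply Finset.sum_nonneg
    intro i hi
    have hi' : (bas cs G).repr γ i ≠ 0 := Finsupp.mem_support_iff.mp hi
    have hpos : G.ρ u (G.α i) ∈ G.PhiPos := by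
      by_cases hiJ : i ∈ J
      · exact hJ i hiJ
      · rcases eq_or_ne i t with rfl | hit
        · exact hupos
        · exact absurd (hsupp i hiJ hit) hi'
    exact mul_nonneg (pos_repr_nonneg cs G hγ i) (pos_repr_nonneg cs G hpos j)
  have h0 : G.ρ u γ = 0 := by
    have hz : (bas cs G).repr (G.ρ u γ) = 0 := by
      ext j
      exact le_antisymm (neg_repr_nonpos cs G hneg j) (hco j)
    simpa using congrArg (bas cs G).repr.symm hz
  exact zero_not_mem_Phi cs G (h0 ▸ smul_mem_Phi cs G u hγ.1)

private lemma u_neg_span {J : Set B} {u : W}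
    (hJ : ∀ r ∈ J, G.ρ u (G.α r) ∈ Set.range G.α)
    {t : B} (htJ : t ∉ J) (huneg : G.ρ u (G.α t) ∈ G.PhiNeg) {γ : V} (hγ : γ ∈ G.PhiPos)
    (hsupp : ∀ j, j ∉ J → j ≠ t → (bas cs G).repr γ j = 0)
    (hct : 0 < (bas cs G).repr γ t) :
    G.ρ u γ ∈ G.PhiNeg := by
  rcases dichotomy cs G (smul_mem_Phi cs G u hγ.1) with hpos | h
  · exfalso
    set T : Set B := {p | ∃ r ∈ J, G.ρ u (G.α r) = G.α p} with hT
    have hkey : ∀ j, j ∉ T → (bas cs G).repr (G.ρ u (G.α t)) j = 0 := by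
      intro j hjT
      have hsum : (bas cs G).repr (G.ρ u γ) j
          = ((bas cs G).repr γ) t * (bas cs G).repr (G.ρ u (G.α t)) j := by
        rw [coords_act, Finsupp.sum]
        apply Finset.sum_eq_single t
        · intro i hi hit
          have hi' : (bas cs G).repr γ i ≠ 0 := Finsupp.mem_support_iff.mp hi
          have hiJ : i ∈ J := by
            by_contra hiJ
            exact hi' (hsupp i hiJ hit)
          obtain ⟨p, hp⟩ := hJ i hiJ
          rw [← hp]
          have hjp : j ≠ p := by
            rintro rfl
            exact hjT ⟨i, hiJ, hp.symm⟩
          rw [show G.α p = bas cs G p from (bas_coe cs G ▸ rfl), Module.Basis.repr_self,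
            Finsupp.single_apply, if_neg (fun h => hjp h.symm), mul_zero]
        · intro ht'
          exact absurd (Finsupp.notMem_support_iff.mp ht') (ne_of_gt hct)
      have h1 := pos_repr_nonneg cs G hpos j
      have h2 := neg_repr_nonpos cs G huneg j
      rw [hsum] at h1
      nlinarith
    have hspan : G.ρ u (G.α t) ∈ Submodule.span ℝ (G.α '' T) := by
      rw [← total_repr' cs G (G.ρ u (G.α t)), Finsupp.sum]
      apply Submodule.sum_mem
      intro i hi
      have hi' := Finsupp.mem_support_iff.mp hi
      have hiT : i ∈ T := by
        by_contra h
        exact hi' (hkey i h)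
      exact Submodule.smul_mem _ _ (Submodule.subset_span ⟨i, hiT, rfl⟩)
    have hTsub : G.α '' T ⊆ ⇑((G.ρ u : V ≃ₗ[ℝ] V) : V →ₗ[ℝ] V) '' (G.α '' J) := by
      rintro _ ⟨p, ⟨r, hr, hrp⟩, rfl⟩
      exact ⟨G.α r, ⟨r, hr, rfl⟩, hrp⟩
    have hspan2 := Submodule.span_mono hTsub hspan
    rw [← Submodule.map_span] at hspan2
    obtain ⟨y, hy, hyt⟩ := hspan2
    have hyα : y = G.α t := (G.ρ u).injective hyt
    rw [hyα] at hy
    exact G.indep.notMem_span_image htJ hy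
  · exact h

private lemma gamma_t_pos {J : Set B} {t : B} {γ : V}
    (hγ : γ ∈ G.perpIn (J ∪ {t}) J ∩ G.PhiPos) :
    (∀ j, j ∉ J → j ≠ t → (bas cs G).repr γ j = 0) ∧ 0 < (bas cs G).repr γ t := by
  obtain ⟨⟨⟨hPhi, hspan⟩, hperp⟩, hpos⟩ := hγ
  have hsupp : ∀ j, j ∉ J → j ≠ t → (bas cs G).repr γ j = 0 := by
    intro j hjJ hjt
    refine span_coords cs G hspan j ?_
    rintro (h | h)
    · exact hjJ h
    · exact hjt h
  refine ⟨hsupp, ?_⟩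
  have h1 : G.form γ γ = 1 := root_form_self cs G hPhi
  have h2 : G.form γ γ = ((bas cs G).repr γ).sum (fun i r => r * G.form γ (G.α i)) := by
    nth_rewrite 2 [← total_repr' cs G γ]
    rw [map_finsuppSum]
    refine Finsupp.sum_congr ?_
    intro i _
    rw [map_smul, smul_eq_mul]
  rw [h2, Finsupp.sum] at h1
  have h3 : ∑ i ∈ ((bas cs G).repr γ).support,
      ((bas cs G).repr γ) i * G.form γ (G.α i)
      = ((bas cs G).repr γ) t * G.form γ (G.α t) := by
    apply Finset.sum_eq_single t
    · intro i hi hit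
      by_cases hiJ : i ∈ J
      · rw [hperp i hiJ, mul_zero]
      · rw [hsupp i hiJ hit, zero_mul]
    · intro ht'
      rw [Finsupp.notMem_support_iff.mp ht', zero_mul]
  rw [h3] at h1
  have h4 := pos_repr_nonneg cs G hpos t
  have h5 : ((bas cs G).repr γ) t ≠ 0 := by
    intro h0
    rw [h0, zero_mul] at h1
    exact one_ne_zero h1.symm
  exact lt_of_le_of_ne h4 (Ne.symm h5)

end Statement6Aux

/-- Lemma `weakExchangeConditionforC`. Let `J ⊆ S`, let `u ∈ W` satisfy
`u·Π_J ⊆ Π`, and let `t ∈ S∖J` be such that `J_{∼t}` is of finite type; put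
`ν = w₀(J_{∼t})·w₀(J_{∼t}∖{t})`. Then `ℓ(uν⁻¹) < ℓ(u) + ℓ(ν)` iff `u·α_t ∈ Φ⁻`. Moreover,
if `ν` fixes `Π_J` pointwise, so that `ν = s_γ` for the unique positive root
`γ ∈ Φ_{J∪{t}}^{⊥J} ∩ Φ⁺`, then these conditions are also equivalent to `u·γ ∈ Φ⁻`. -/
theorem statement_6 (J : Set B) (u : W)
    (hu : (fun v => G.ρ u v) '' G.PiI J ⊆ G.Pi0)
    (t : B) (ht : t ∉ J) (hfin : finType cs (compUnion M J {t})) :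
    (cs.length (u * (nu cs J t)⁻¹) < cs.length u + cs.length (nu cs J t) ↔
      G.ρ u (G.α t) ∈ G.PhiNeg) ∧
    (∀ γ : V, (∀ r ∈ J, G.ρ (nu cs J t) (G.α r) = G.α r) →
      γ ∈ G.perpIn (J ∪ {t}) J ∩ G.PhiPos →
      (cs.length (u * (nu cs J t)⁻¹) < cs.length u + cs.length (nu cs J t) ↔
        G.ρ u γ ∈ G.PhiNeg)) := by
  have hJrange : ∀ r ∈ J, G.ρ u (G.α r) ∈ Set.range G.α :=
    fun r hr => hu ⟨G.α r, ⟨r, hr, rfl⟩, rfl⟩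
  have hJpos : ∀ r ∈ J, G.ρ u (G.α r) ∈ G.PhiPos := by
    intro r hr
    obtain ⟨p, hp⟩ := hJrange r hr
    rw [← hp]
    exact alpha_mem_phiPos cs G p
  have halphat : G.ρ u (G.α t) ∈ G.Phi := smul_mem_Phi cs G u (alpha_mem_Phi cs G t)
  have main : cs.length (u * (nu cs J t)⁻¹) < cs.length u + cs.length (nu cs J t) ↔
      G.ρ u (G.α t) ∈ G.PhiNeg := by
    rw [lt_iff_exists_inv cs G u (nu cs J t)]
    constructor
    · rintro ⟨γ, hγ, hνγ, huγ⟩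
      rcases dichotomy cs G halphat with hpos | hneg
      · exfalso
        have hsupp0 := inv_supp cs G J t hγ hνγ
        have hsupp : ∀ j, j ∉ J → j ≠ t → (bas cs G).repr γ j = 0 := by
          intro j hjJ hjt
          apply hsupp0 j
          intro hjK
          rcases K_sub J t hjK with h | h
          · exact hjJ h
          · exact hjt h
        exact u_pos_act cs G hJpos hpos hγ hsupp huγ
      · exact hneg
    · intro hneg
      exact ⟨G.α t, alpha_mem_phiPos cs G t, nu_alpha_t_neg cs G J t ht hfin, hneg⟩
  refine ⟨main, ?_⟩
  intro γ _ hγ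
  rw [main]
  obtain ⟨hsupp, hct⟩ := gamma_t_pos cs G hγ
  constructor
  · intro hneg
    exact u_neg_span cs G hJrange ht hneg hγ.2 hsupp hct
  · intro huγ
    rcases dichotomy cs G halphat with hpos | hneg
    · exact absurd huγ (u_pos_act cs G hJpos hpos hγ.2 hsupp)
    · exact hneg
end CoxCentralizer
end
end
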